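/- arXiv:1411.1107 — 10 statements merged into one kernel-verified Lean document; each statement's English description precedes it below -/
import Mathlib

section
/- Let $g$ be a finite connected graph with edge set $E(g)$. For a spanning tree $T$ of $g$ and $s \in [0,1]^{E(T)}$, define for any edge $\ell = \{i,j\} \in E(g)$ the value $s^T(\ell) = \min\{s(\ell') : \ell' \text{ on the unique } T\text{-path joining } i \text{ and } j\}$. Then $\sum_{T \text{ spanning tree of } g} \int_{[0,1]^{E(T)}} \prod_{\ell \in E(g) \setminus E(T)} s^T(\ell) \, \prod_{\ell \in E(T)} ds(\ell) = 1$. -/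
/-!
For almost every `s ∈ [0,1]^E` the weights are distinct and `< 1`; for such `s` exactly one
spanning tree `T` of `g` has every edge `ℓ ∉ T` strictly lighter than all edges of the `T`-path
joining its endpoints, namely the maximum-weight spanning tree (existence by the exchange argument,
uniqueness by looking at the heaviest edge in the symmetric difference of two such trees). So
the indicators of the events `{s ℓ < s^T(ℓ) for all ℓ ∈ E(g) ∖ E(T)}` sum to `1` almost
everywhere. Since `s^T` only depends on the coordinates in `E(T)`, integrating out the
independent uniform coordinates `s ℓ`, `ℓ ∉ E(T)`, shows that the probability of that event is
the `T`-summand `∫ ∏_{ℓ ∉ E(T)} s^T(ℓ)`.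
-/

open scoped Classical
open MeasureTheory

/-- For a tree `T` on `V` with edge weights `s`, `treeMin T hT s e` is the minimum of `s`
over the edges of the unique `T`-path joining the two endpoints of the pair `e`
(with the convention that the minimum also includes the value `1`). -/
noncomputable def treeMin {V : Type*} (T : SimpleGraph V) (hT : T.IsTree)
    (s : Sym2 V → ℝ) (e : Sym2 V) : ℝ :=
  (((hT.existsUnique_path e.out.1 e.out.2).exists.choose).edges.map s).foldr min 1

namespace List

variable {α : Type*} [LinearOrder α] {a b : α} {l : List α}

lemma lt_foldr_min_iff : a < l.foldr min b ↔ a < b ∧ ∀ x ∈ l, a < x := by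
  induction l with
  | nil => simp
  | cons x l ih => simp only [foldr_cons, lt_min_iff, ih, mem_cons, forall_eq_or_imp]; tauto

lemma le_foldr_min_iff : a ≤ l.foldr min b ↔ a ≤ b ∧ ∀ x ∈ l, a ≤ x := by
  induction l with
  | nil => simp
  | cons x l ih => simp only [foldr_cons, le_min_iff, ih, mem_cons, forall_eq_or_imp]; tauto

end List

lemma Sym2.mk_out_fst_out_snd {α : Type*} (e : Sym2 α) : s(e.out.1, e.out.2) = e :=
  e.out_eq

namespace SimpleGraph

variable {V : Type*} {T : SimpleGraph V}

lemma IsAcyclic.mem_edges_of_adj (hT : T.IsAcyclic) {u v : V} (h : T.Adj u v)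
    (p : T.Walk u v) : s(u, v) ∈ p.edges :=
  isBridge_iff_forall_walk_mem_edges.1 (isAcyclic_iff_forall_adj_isBridge.1 hT h) p

lemma IsTree.exists_isTree_edgeSet_eq_insert_diff [Finite V] (hT : T.IsTree) {a b : V}
    (hab : a ≠ b) (hnT : ¬ T.Adj a b) {p : T.Walk a b} (hp : p.IsPath) {f : Sym2 V}
    (hf : f ∈ p.edges) :
    ∃ T' : SimpleGraph V, T'.IsTree ∧ T'.edgeSet = insert s(a, b) (T.edgeSet \ {f}) := by
  have hfT : f ∈ T.edgeSet := p.edges_subset_edgeSet hf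
  have hle : T ≤ T ⊔ edge a b := le_sup_left
  have hadj : (T ⊔ edge a b).Adj b a := Or.inr ((edge_adj ..).2 ⟨Or.inr ⟨rfl, rfl⟩, hab.symm⟩)
  have hcycle : (Walk.cons hadj (p.mapLe hle)).IsCycle := by
    refine Path.cons_isCycle ⟨_, hp.mapLe hle⟩ hadj ?_
    rw [Walk.edges_mapLe_eq_edges, Sym2.eq_swap]
    exact fun h => hnT (p.adj_of_mem_edges h)
  have hconn : ((T ⊔ edge a b).deleteEdges {f}).Connected := by
    induction f with | h x y =>
    refine (hT.connected.mono hle).connected_delete_edge_of_not_isBridge fun hbr => ?_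
    exact hbr.notMem_edges_of_isCycle hcycle (by simp [hf])
  have hedges : ((T ⊔ edge a b).deleteEdges {f}).edgeSet = insert s(a, b) (T.edgeSet \ {f}) := by
    have hfab : f ≠ s(a, b) := fun h => hnT (by rw [← mem_edgeSet, ← h]; exact hfT)
    ext e
    simp only [edgeSet_deleteEdges, edgeSet_sup, edgeSet_edge_of_ne hab]
    grind
  refine ⟨_, isTree_iff_connected_and_card.2 ⟨hconn, ?_⟩, hedges⟩
  have hcard := (isTree_iff_connected_and_card.1 hT).2
  rw [Nat.card_coe_set_eq] at hcard ⊢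
  rw [hedges, Set.ncard_insert_of_notMem (fun h => hnT h.1) (Set.toFinite _),
    Set.ncard_sdiff_singleton_add_one hfT (Set.toFinite _), hcard]

end SimpleGraph

section TreeMin

open SimpleGraph

variable {V : Type*} {T : SimpleGraph V}

noncomputable def treePath (hT : T.IsTree) (e : Sym2 V) : T.Walk e.out.1 e.out.2 :=
  (hT.existsUnique_path e.out.1 e.out.2).exists.choose

lemma treePath_isPath (hT : T.IsTree) (e : Sym2 V) : (treePath hT e).IsPath :=
  (hT.existsUnique_path e.out.1 e.out.2).exists.choose_spec

lemma lt_treeMin_iff (hT : T.IsTree) {s : Sym2 V → ℝ} {e : Sym2 V} {a : ℝ} :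
    a < treeMin T hT s e ↔ a < 1 ∧ ∀ f ∈ (treePath hT e).edges, a < s f := by
  simp [treeMin, treePath, List.lt_foldr_min_iff]

lemma treeMin_mem_Icc (hT : T.IsTree) {s : Sym2 V → ℝ} (hs : ∀ f, 0 ≤ s f) (e : Sym2 V) :
    treeMin T hT s e ∈ Set.Icc (0 : ℝ) 1 :=
  ⟨List.le_foldr_min_iff.2 ⟨zero_le_one, by simp [hs]⟩,
    le_of_not_gt fun h => (lt_irrefl _ ((lt_treeMin_iff hT).1 h).1)⟩

lemma treeMin_congr (hT : T.IsTree) {s s' : Sym2 V → ℝ} (h : ∀ f ∈ T.edgeSet, s f = s' f)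
    (e : Sym2 V) : treeMin T hT s e = treeMin T hT s' e := by
  refine congrArg (List.foldr min 1) (List.map_congr_left fun f hf => h f ?_)
  exact (treePath hT e).edges_subset_edgeSet hf

lemma measurable_treeMin (hT : T.IsTree) (e : Sym2 V) :
    Measurable fun s : Sym2 V → ℝ => treeMin T hT s e := by
  unfold treeMin
  induction (hT.existsUnique_path e.out.1 e.out.2).exists.choose.edges with
  | nil => exact measurable_const
  | cons f l ih => exact (measurable_pi_apply f).min ih

end TreeMin

section MaxSpanningTree

open SimpleGraph
open scoped symmDiff

variable {V : Type*} {g T T' : SimpleGraph V} {s : Sym2 V → ℝ}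

/-- For distinct weights `< 1` this cycle criterion characterizes the maximum-weight spanning tree
of `g`. -/
def IsMaxSpanningTree (g T : SimpleGraph V) (hT : T.IsTree) (s : Sym2 V → ℝ) : Prop :=
  ∀ ℓ ∈ g.edgeSet \ T.edgeSet, s ℓ < treeMin T hT s ℓ

lemma IsMaxSpanningTree.exists_lt_of_mem_diff {hT : T.IsTree} (h : IsMaxSpanningTree g T hT s)
    (hT'g : T' ≤ g) (hT' : T'.IsAcyclic) {e : Sym2 V} (he : e ∈ T'.edgeSet \ T.edgeSet) :
    ∃ f ∈ T.edgeSet \ T'.edgeSet, s e < s f := by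
  obtain ⟨-, hlt⟩ := (lt_treeMin_iff hT).1 (h e ⟨edgeSet_mono hT'g he.1, he.2⟩)
  obtain ⟨f, hf, hfT'⟩ : ∃ f ∈ (treePath hT e).edges, f ∉ T'.edgeSet := by
    by_contra! hsub
    have hadj : T'.Adj e.out.1 e.out.2 := by rw [← mem_edgeSet, e.mk_out_fst_out_snd]; exact he.1
    have hmem := hT'.mem_edges_of_adj hadj ((treePath hT e).transfer T' hsub)
    rw [Walk.edges_transfer, e.mk_out_fst_out_snd] at hmem
    exact he.2 ((treePath hT e).edges_subset_edgeSet hmem)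
  exact ⟨f, ⟨(treePath hT e).edges_subset_edgeSet hf, hfT'⟩, hlt f hf⟩

lemma IsMaxSpanningTree.eq [Finite V] {hT : T.IsTree} {hT' : T'.IsTree}
    (h : IsMaxSpanningTree g T hT s) (h' : IsMaxSpanningTree g T' hT' s) (hTg : T ≤ g)
    (hT'g : T' ≤ g) : T = T' := by
  by_contra hne
  have hdiff : (T.edgeSet ∆ T'.edgeSet).Nonempty := by
    rw [Set.nonempty_iff_ne_empty, Ne, ← Set.bot_eq_empty, symmDiff_eq_bot, edgeSet_inj]
    exact hne
  obtain ⟨e, he, hmax⟩ := Set.exists_max_image _ s (Set.toFinite _) hdiff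
  rcases Set.mem_symmDiff.1 he with he | he
  · obtain ⟨f, hf, hlt⟩ := h'.exists_lt_of_mem_diff hTg hT.isAcyclic he
    exact (hmax f (Set.mem_symmDiff.2 (Or.inr hf))).not_gt hlt
  · obtain ⟨f, hf, hlt⟩ := h.exists_lt_of_mem_diff hT'g hT'.isAcyclic he
    exact (hmax f (Set.mem_symmDiff.2 (Or.inl hf))).not_gt hlt

lemma exists_isMaxSpanningTree [Fintype V] (hg : g.Connected) (hs : Function.Injective s)
    (hs1 : ∀ e, s e < 1) : ∃ T : {T // T ≤ g ∧ T.IsTree}, IsMaxSpanningTree g T.1 T.2.2 s := by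
  obtain ⟨T₀, hT₀⟩ := hg.exists_isTree_le
  obtain ⟨T, ⟨hTg, hT⟩, hmax⟩ := Set.exists_max_image {T | T ≤ g ∧ T.IsTree}
    (fun T => ∑ e ∈ T.edgeFinset, s e) (Set.toFinite _) ⟨T₀, hT₀⟩
  refine ⟨⟨T, hTg, hT⟩, fun ℓ hℓ => ?_⟩
  by_contra! hle
  obtain ⟨f, hf, hfle⟩ : ∃ f ∈ (treePath hT ℓ).edges, s f ≤ s ℓ := by
    by_contra! hlt
    exact hle.not_gt ((lt_treeMin_iff hT).2 ⟨hs1 ℓ, hlt⟩)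
  have hfT : f ∈ T.edgeSet := (treePath hT ℓ).edges_subset_edgeSet hf
  have hfℓ : f ≠ ℓ := fun h => hℓ.2 (h ▸ hfT)
  have hadj : g.Adj ℓ.out.1 ℓ.out.2 := by rw [← mem_edgeSet, ℓ.mk_out_fst_out_snd]; exact hℓ.1
  obtain ⟨T', hT', hT'E⟩ := hT.exists_isTree_edgeSet_eq_insert_diff hadj.ne
    (by rw [← mem_edgeSet, ℓ.mk_out_fst_out_snd]; exact hℓ.2) (treePath_isPath hT ℓ) hf
  rw [ℓ.mk_out_fst_out_snd] at hT'E
  have hT'g : T' ≤ g := by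
    rw [← edgeSet_subset_edgeSet, hT'E]
    exact Set.insert_subset hℓ.1 (Set.sdiff_subset.trans (edgeSet_mono hTg))
  have hT'F : T'.edgeFinset = insert ℓ (T.edgeFinset.erase f) := by
    ext e; simp [hT'E, and_comm]
  have hweight := hmax T' ⟨hT'g, hT'⟩
  rw [hT'F, Finset.sum_insert (by simp [hℓ.2]), Finset.sum_erase_eq_sub (by simpa using hfT)]
    at hweight
  linarith [(hfle.lt_of_ne (hs.ne hfℓ))]

end MaxSpanningTree

section UnitCube

open Set ProbabilityTheory

variable {ι : Type*} [Fintype ι]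

local notation "ν₀" => volume.restrict (Icc (0 : ℝ) 1)

instance isProbabilityMeasure_volume_restrict_Icc : IsProbabilityMeasure ν₀ :=
  ⟨by simp⟩

lemma volume_restrict_Icc_Iio {c : ℝ} (hc : c ∈ Icc (0 : ℝ) 1) :
    ν₀ (Iio c) = ENNReal.ofReal c := by
  have h : Iio c ∩ Icc 0 1 = Ico 0 c := by
    ext x; simp only [mem_inter_iff, mem_Iio, mem_Icc, mem_Ico]; grind
  rw [Measure.restrict_apply measurableSet_Iio, h, Real.volume_Ico, sub_zero]

lemma MeasureTheory.Measure.pi_setOf_apply_eq_apply_eq_zero {μ : ι → Measure ℝ}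
    [∀ i, IsProbabilityMeasure (μ i)] [∀ i, NullSingletonClass (μ i)] {i j : ι} (hij : i ≠ j) :
    Measure.pi μ {x | x i = x j} = 0 := by
  have hind : IndepFun (fun x : ι → ℝ => x i) (fun x => x j) (Measure.pi μ) :=
    (iIndepFun_pi (X := fun _ => id) fun _ => aemeasurable_id).indepFun hij
  rw [indepFun_iff_map_prod_eq_prod_map_map (measurable_pi_apply i).aemeasurable
    (measurable_pi_apply j).aemeasurable] at hind
  have hdiag : MeasurableSet {p : ℝ × ℝ | p.1 = p.2} := measurableSet_diagonal
  have hdiag_null := congrArg (fun m => m {p : ℝ × ℝ | p.1 = p.2}) hind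
  rw [Measure.map_apply (by fun_prop) hdiag, Measure.prod_apply hdiag] at hdiag_null
  rw [show {x : ι → ℝ | x i = x j} = (fun x => (x i, x j)) ⁻¹' {p | p.1 = p.2} from rfl,
    hdiag_null]
  simp [(measurePreserving_eval μ j).map_eq]

lemma ae_injective_pi {μ : ι → Measure ℝ}
    [∀ i, IsProbabilityMeasure (μ i)] [∀ i, NullSingletonClass (μ i)] :
    ∀ᵐ x ∂Measure.pi μ, Function.Injective x := by
  have h : ∀ᵐ x ∂Measure.pi μ, ∀ i j, i ≠ j → x i ≠ x j := by
    refine ae_all_iff.2 fun i => ae_all_iff.2 fun j => ?_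
    by_cases hij : i = j
    · exact Filter.Eventually.of_forall fun _ h => absurd hij h
    · exact measure_mono_null (fun x hx => by simpa [hij] using hx)
        (Measure.pi_setOf_apply_eq_apply_eq_zero hij)
  filter_upwards [h] with x hx i j hxij
  by_contra hij
  exact hx i j hij hxij

lemma ae_mem_Icc_pi : ∀ᵐ x ∂Measure.pi fun _ : ι => ν₀, ∀ i, x i ∈ Icc (0 : ℝ) 1 :=
  ae_all_iff.2 fun _ => Measure.tendsto_eval_ae_ae.eventually (ae_restrict_mem measurableSet_Icc)

lemma ae_lt_one_pi : ∀ᵐ x ∂Measure.pi fun _ : ι => ν₀, ∀ i, x i < 1 := by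
  filter_upwards [ae_mem_Icc_pi, ae_all_iff.2 fun i => Measure.ae_eval_ne _ i (1 : ℝ)]
    with x hx hx1 i using (hx i).2.lt_of_ne (hx1 i)

lemma integral_indicator_univ_pi_Iio {c : ι → ℝ} (hc : ∀ i, c i ∈ Icc (0 : ℝ) 1) :
    ∫ x, (univ.pi fun i => Iio (c i)).indicator 1 x ∂Measure.pi (fun _ : ι => ν₀) = ∏ i, c i := by
  rw [integral_indicator_one (.univ_pi fun _ => measurableSet_Iio), measureReal_def,
    Measure.pi_pi, ENNReal.toReal_prod]
  exact Finset.prod_congr rfl fun i _ => by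
    rw [volume_restrict_Icc_Iio (hc i), ENNReal.toReal_ofReal (hc i).1]

lemma integral_pi_eq_integral_integral_subtype {μ : ι → Measure ℝ}
    [∀ i, SigmaFinite (μ i)] (D : Finset ι) {F : (ι → ℝ) → ℝ}
    (hF : Integrable F (Measure.pi μ)) :
    ∫ x, F x ∂Measure.pi μ =
      ∫ y, ∫ x, F ((MeasurableEquiv.piEquivPiSubtypeProd (fun _ => ℝ) (· ∈ D)).symm (x, y))
        ∂Measure.pi (fun i : D => μ i) ∂Measure.pi (fun i : {i // i ∉ D} => μ i) := by
  have he := (measurePreserving_piEquivPiSubtypeProd μ (· ∈ D)).symm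
  rw [← he.integral_comp' F, integral_prod_symm]
  · congr!
  exact (he.integrable_comp_emb (MeasurableEquiv.measurableEmbedding _)).2 hF

lemma measurableSet_setOf_forall_lt (D : Finset ι) {c : ι → (ι → ℝ) → ℝ}
    (hc : ∀ i ∈ D, Measurable (c i)) : MeasurableSet {x : ι → ℝ | ∀ i ∈ D, x i < c i x} := by
  simp only [ofPred_forall]
  exact .iInter fun i => .iInter fun hi => measurableSet_lt (measurable_pi_apply i) (hc i hi)

lemma integral_prod_eq_integral_indicator (D : Finset ι) {c : ι → (ι → ℝ) → ℝ}
    (hc_meas : ∀ i ∈ D, Measurable (c i))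
    (hc_indep : ∀ i ∈ D, ∀ x y, (∀ j ∉ D, x j = y j) → c i x = c i y)
    (hc_mem : ∀ i ∈ D, ∀ x, (∀ j, x j ∈ Icc (0 : ℝ) 1) → c i x ∈ Icc (0 : ℝ) 1) :
    ∫ x, ∏ i ∈ D, c i x ∂Measure.pi (fun _ : ι => ν₀) =
      ∫ x, {x | ∀ i ∈ D, x i < c i x}.indicator 1 x ∂Measure.pi (fun _ : ι => ν₀) := by
  have hint : Integrable (fun x => ∏ i ∈ D, c i x) (Measure.pi fun _ : ι => ν₀) := by
    refine .of_bound (Finset.measurable_prod _ hc_meas).aestronglyMeasurable 1 ?_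
    filter_upwards [ae_mem_Icc_pi] with x hx
    have h := fun i hi => hc_mem i hi x hx
    rw [Real.norm_of_nonneg (Finset.prod_nonneg fun i hi => (h i hi).1)]
    exact Finset.prod_le_one (fun i hi => (h i hi).1) fun i hi => (h i hi).2
  rw [integral_pi_eq_integral_integral_subtype D hint,
    integral_pi_eq_integral_integral_subtype D (F := {x | ∀ i ∈ D, x i < c i x}.indicator 1)
      ((integrable_const 1).indicator (measurableSet_setOf_forall_lt D hc_meas))]
  refine integral_congr_ae ?_
  filter_upwards [ae_mem_Icc_pi] with y hy
  set e := MeasurableEquiv.piEquivPiSubtypeProd (fun _ : ι => ℝ) (· ∈ D)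
  have hc_eq : ∀ i ∈ D, ∀ x, c i (e.symm (x, y)) = c i (e.symm (0, y)) := fun i hi x =>
    hc_indep i hi _ _ fun j hj => by simp [e, hj]
  have hc_mem' : ∀ i : D, c i (e.symm (0, y)) ∈ Icc (0 : ℝ) 1 := fun i =>
    hc_mem i i.2 _ fun j => by by_cases hj : j ∈ D <;> simp [e, hj, hy]
  have hbox : {x | e.symm (x, y) ∈ {x | ∀ i ∈ D, x i < c i x}} =
      univ.pi fun i : D => Iio (c i (e.symm (0, y))) := by
    ext x
    simp only [mem_ofPred_eq, mem_univ_pi, mem_Iio, Subtype.forall]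
    refine forall₂_congr fun i hi => ?_
    rw [hc_eq i hi]
    simp [e, hi]
  calc _ = ∏ i ∈ D, c i (e.symm (0, y)) := by
        simp_rw [fun x => Finset.prod_congr rfl fun i hi => hc_eq i hi x]
        simp
    _ = _ := by
        change _ = ∫ x, {x | e.symm (x, y) ∈ {x | ∀ i ∈ D, x i < c i x}}.indicator 1 x ∂_
        rw [hbox, integral_indicator_univ_pi_Iio hc_mem']
        exact (Finset.prod_coe_sort D _).symm

end UnitCube

section Integral

variable {V : Type*} [Fintype V] [DecidableEq V] {g T : SimpleGraph V}

lemma setOf_isMaxSpanningTree (hT : T.IsTree) :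
    {s | IsMaxSpanningTree g T hT s} =
      {s | ∀ ℓ ∈ g.edgeFinset \ T.edgeFinset, s ℓ < treeMin T hT s ℓ} := by
  ext s
  simp [IsMaxSpanningTree]

lemma measurableSet_setOf_isMaxSpanningTree (hT : T.IsTree) :
    MeasurableSet {s | IsMaxSpanningTree g T hT s} := by
  rw [setOf_isMaxSpanningTree]
  exact measurableSet_setOf_forall_lt _ fun e _ => measurable_treeMin hT e

lemma integral_prod_treeMin_eq_integral_indicator (hT : T.IsTree) :
    ∫ s, ∏ e ∈ g.edgeFinset \ T.edgeFinset, treeMin T hT s e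
        ∂Measure.pi (fun _ : Sym2 V => volume.restrict (Set.Icc (0 : ℝ) 1)) =
      ∫ s, {s | IsMaxSpanningTree g T hT s}.indicator 1 s
        ∂Measure.pi (fun _ : Sym2 V => volume.restrict (Set.Icc (0 : ℝ) 1)) := by
  rw [setOf_isMaxSpanningTree]
  refine integral_prod_eq_integral_indicator _ (fun e _ => measurable_treeMin hT e)
    (fun e _ x y hxy => treeMin_congr hT (fun f hf => hxy f ?_) e)
    (fun e _ x hx => treeMin_mem_Icc hT (fun f => (hx f).1) e)
  simp [hf]

lemma sum_indicator_isMaxSpanningTree_eq_one (hg : g.Connected) {s : Sym2 V → ℝ}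
    (hs : Function.Injective s) (hs1 : ∀ e, s e < 1) :
    ∑ T : {T // T ≤ g ∧ T.IsTree},
      {s | IsMaxSpanningTree g T.1 T.2.2 s}.indicator 1 s = (1 : ℝ) := by
  obtain ⟨T, hT⟩ := exists_isMaxSpanningTree hg hs hs1
  rw [Finset.sum_eq_single T (fun T' _ hne => ?_) (by simp)]
  · simp [hT]
  · exact Set.indicator_of_notMem
      (fun h' => hne (Subtype.ext (IsMaxSpanningTree.eq h' hT T'.2.1 T.2.1))) _

end Integral

/-- Brydges–Kennedy/AR partition of unity: for a finite connected graph `g`, the sum over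
spanning trees `T` of `g` of the integral over `s ∈ [0,1]^{E}` of
`∏_{ℓ ∈ E(g) ∖ E(T)} s^T(ℓ)` equals `1`. -/
theorem spanning_tree_partition_of_unity {V : Type*} [Fintype V] [DecidableEq V]
    (g : SimpleGraph V) (hg : g.Connected) :
    ∑ T : {T : SimpleGraph V // T ≤ g ∧ T.IsTree},
        ∫ s : Sym2 V → ℝ,
          (∏ e ∈ g.edgeFinset \ (T : SimpleGraph V).edgeFinset,
            treeMin (T : SimpleGraph V) T.2.2 s e)
          ∂(Measure.pi fun _ : Sym2 V => volume.restrict (Set.Icc (0 : ℝ) 1)) = 1 := by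
  simp_rw [integral_prod_treeMin_eq_integral_indicator]
  rw [← integral_finsetSum _ fun T _ =>
    (integrable_const 1).indicator (measurableSet_setOf_isMaxSpanningTree T.2.2)]
  calc _ = ∫ _, (1 : ℝ) ∂(Measure.pi fun _ : Sym2 V => volume.restrict (Set.Icc (0 : ℝ) 1)) :=
        integral_congr_ae <| by
          filter_upwards [ae_injective_pi, ae_lt_one_pi] with s hs hs1
          exact sum_indicator_isMaxSpanningTree_eq_one hg hs hs1
    _ = 1 := by simp
end

section
/- Let $G$ be a finite connected graph on $n \geq 2$ vertices. Then $\left| \sum_{g} (-1)^{|E(g)|} \right| \leq N_{ST}(G)$, where the sum is over all connected spanning subgraphs $g$ of $G$ (subgraphs with the same vertex set, whose edge set is a subset of $E(G)$, and which are connected), and $N_{ST}(G)$ is the number of spanning trees of $G$. -/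
/-!
Fix an injective labelling `k` of the edges. A connected edge set `h` contains exactly one spanning
tree `t` such that every edge of `h \ t` is the largest edge of the cycle it closes with `t`: its
minimum spanning tree for the weights `2 ^ k e`, unique by the usual exchange argument. So the
connected edge sets are the disjoint union, over the spanning trees `t` of `G`, of the Boolean
intervals `[t, t ∪ A(t)]`, where `A(t)` is the set of edges externally active for `t`. The
alternating sum over such an interval is `±1` if `A(t) = ∅` and `0` otherwise.
-/

open scoped Classical

open Finset

open scoped symmDiff

theorem Finset.sum_Icc_neg_one_pow_card {α : Type*} [DecidableEq α] {s u : Finset α}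
    (h : s ⊆ u) : ∑ x ∈ Icc s u, (-1 : ℤ) ^ #x = if s = u then (-1) ^ #s else 0 := by
  have hdisj : ∀ x ∈ (u \ s).powerset, Disjoint s x := fun x hx =>
    disjoint_of_subset_right (mem_powerset.1 hx) disjoint_sdiff
  rw [Icc_eq_image_powerset h, sum_image fun x hx y hy hxy => by
    rw [← union_sdiff_cancel_left (hdisj x hx), hxy, union_sdiff_cancel_left (hdisj y hy)]]
  calc ∑ x ∈ (u \ s).powerset, (-1 : ℤ) ^ #(s ∪ x)
      = (-1) ^ #s * ∑ x ∈ (u \ s).powerset, (-1 : ℤ) ^ #x := by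
        rw [mul_sum]
        exact sum_congr rfl fun x hx => by rw [card_union_of_disjoint (hdisj x hx), pow_add]
    _ = if s = u then (-1) ^ #s else 0 := by
        rw [sum_powerset_neg_one_pow_card]
        by_cases hsu : s = u
        · simp [hsu]
        · simpa [hsu, sdiff_eq_empty_iff_subset] using fun h' => hsu (h.antisymm h')

namespace SimpleGraph

variable {V : Type*}

theorem Connected.exists_exchange {T T' : SimpleGraph V} (hT : T.Connected) {u v : V}
    (hbridge : T'.IsBridge s(u, v)) (huv : ¬T.Adj u v) :
    ∃ a b, T.Adj a b ∧ ¬T'.Adj a b ∧ (T.deleteEdges {s(a, b)} ⊔ edge u v).Connected := by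
  set S : Set V := {x | (T'.deleteEdges {s(u, v)}).Reachable u x}
  obtain ⟨p, hp⟩ := hT.exists_isPath u v
  obtain ⟨d, hd, ha, hb⟩ := p.exists_boundary_dart S (Reachable.refl u) hbridge
  obtain ⟨⟨a, b⟩, hab⟩ := d
  have hne : s(a, b) ≠ s(u, v) := fun h => huv (by rw [← mem_edgeSet, ← h]; exact hab)
  refine ⟨a, b, hab, fun hab' => hb (ha.trans (Adj.reachable ?_)), ?_⟩
  · simpa [hne] using hab'
  have hvu_ne : v ≠ u := by rintro rfl; exact hbridge (Reachable.refl _)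
  have hvu : (T ⊔ edge u v).Adj v u :=
    Or.inr ((edge_adj ..).2 ⟨Or.inr ⟨rfl, rfl⟩, hvu_ne⟩)
  -- `s(a, b)` lies on the cycle formed by `p` and the new edge `uv`, so it is no bridge
  have hcycle : (Walk.cons hvu (p.mapLe le_sup_left)).IsCycle := by
    refine (Walk.cons_isCycle_iff _ _).2 ⟨hp.mapLe _, fun h => huv ?_⟩
    rw [Walk.edges_mapLe_eq_edges] at h
    exact (T.mem_edgeSet.1 (p.edges_subset_edgeSet h)).symm
  have hnb : ¬(T ⊔ edge u v).IsBridge s(a, b) := by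
    rw [isBridge_iff, not_not]
    refine (adj_and_reachable_delete_edges_iff_exists_cycle.2 ⟨v, _, hcycle, ?_⟩).2
    rw [Walk.edges_cons, Walk.edges_mapLe_eq_edges]
    exact List.mem_cons_of_mem _ (List.mem_map_of_mem hd)
  have hdel : (edge u v).deleteEdges {s(a, b)} = edge u v := by
    rw [edge, deleteEdges_fromEdgeSet, Set.sdiff_singleton_eq_self (by simpa using hne)]
  simpa [hdel] using (hT.mono le_sup_left).connected_delete_edge_of_not_isBridge hnb

theorem fromEdgeSet_insert_erase [DecidableEq V] (t : Finset (Sym2 V)) (u v : V)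
    (f : Sym2 V) :
    fromEdgeSet ↑(insert s(u, v) (t.erase f)) =
      (fromEdgeSet ↑t).deleteEdges {f} ⊔ edge u v := by
  rw [coe_insert, coe_erase, Set.insert_eq, Set.union_comm, fromEdgeSet_union,
    ← deleteEdges_fromEdgeSet, edge]

theorem edgeSet_fromEdgeSet_of_subset {G : SimpleGraph V} {s : Set (Sym2 V)}
    (hs : s ⊆ G.edgeSet) : (fromEdgeSet s).edgeSet = s := by
  rw [edgeSet_fromEdgeSet, _root_.sdiff_eq_self_iff_disjoint]
  exact Set.disjoint_left.2 fun e hdiag he => G.not_isDiag_of_mem_edgeSet (hs he) hdiag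

section EdgeSubsets

variable [Fintype V]

noncomputable def edgeSubsets (G : SimpleGraph V) (p : SimpleGraph V → Prop) [DecidablePred p] :
    Finset (Finset (Sym2 V)) :=
  G.edgeFinset.powerset.filter fun s => p (fromEdgeSet ↑s)

theorem mem_edgeSubsets {G : SimpleGraph V} {p : SimpleGraph V → Prop} [DecidablePred p]
    {s : Finset (Sym2 V)} :
    s ∈ G.edgeSubsets p ↔ s ⊆ G.edgeFinset ∧ p (fromEdgeSet ↑s) := by
  rw [edgeSubsets, mem_filter, mem_powerset]

variable [DecidableEq V]

theorem image_edgeFinset_filter_le (G : SimpleGraph V) (p : SimpleGraph V → Prop)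
    [DecidablePred p] :
    (univ.filter fun H => H ≤ G ∧ p H).image (fun H => H.edgeFinset) = G.edgeSubsets p := by
  ext s
  simp only [edgeSubsets, mem_image, mem_filter, mem_univ, true_and, mem_powerset]
  constructor
  · rintro ⟨H, ⟨hle, hp⟩, rfl⟩
    rw [coe_edgeFinset, fromEdgeSet_edgeSet]
    exact ⟨edgeFinset_mono hle, hp⟩
  · rintro ⟨hs, hp⟩
    have hs' : (fromEdgeSet (s : Set (Sym2 V))).edgeSet = s :=
      edgeSet_fromEdgeSet_of_subset fun e he => mem_edgeFinset.1 (hs he)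
    refine ⟨fromEdgeSet ↑s, ⟨?_, hp⟩, coe_injective (by rw [coe_edgeFinset, hs'])⟩
    rwa [← edgeSet_subset_edgeSet, hs', ← coe_edgeFinset, coe_subset]

theorem sum_filter_le_eq_sum_edgeSubsets {M : Type*} [AddCommMonoid M] (G : SimpleGraph V)
    (p : SimpleGraph V → Prop) [DecidablePred p] (f : Finset (Sym2 V) → M) :
    ∑ H ∈ univ.filter (fun H => H ≤ G ∧ p H), f H.edgeFinset =
      ∑ s ∈ G.edgeSubsets p, f s := by
  rw [← image_edgeFinset_filter_le, sum_image fun _ _ _ _ h => edgeFinset_inj.1 h]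

theorem card_filter_le_eq_card_edgeSubsets (G : SimpleGraph V) (p : SimpleGraph V → Prop)
    [DecidablePred p] :
    #(univ.filter fun H => H ≤ G ∧ p H) = #(G.edgeSubsets p) := by
  rw [← image_edgeFinset_filter_le, card_image_of_injective _ fun _ _ h => edgeFinset_inj.1 h]

end EdgeSubsets

section MinSpanningTree

variable [DecidableEq V] (k : Sym2 V → ℕ)

/-- `t - f + e` is connected exactly when `f` lies on the cycle that `e` closes with `t`, so for a
tree `t` this says that `e` is the largest edge of that cycle (Tutte's external activity for the
reversed order); `IsMinSpanningTree` is then the cycle criterion for minimum spanning trees. -/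
def IsExternallyActive (t : Finset (Sym2 V)) (e : Sym2 V) : Prop :=
  ∀ f ∈ t, (fromEdgeSet (↑(insert e (t.erase f)) : Set (Sym2 V))).Connected → k f < k e

structure IsMinSpanningTree (h t : Finset (Sym2 V)) : Prop where
  subset : t ⊆ h
  isTree : (fromEdgeSet (t : Set (Sym2 V))).IsTree
  isExternallyActive : ∀ e ∈ h \ t, IsExternallyActive k t e

variable {k}

theorem lt_of_sum_two_pow_le (hk : Function.Injective k) {t : Finset (Sym2 V)} {e f : Sym2 V}
    (hf : f ∈ t) (he : e ∉ t)
    (hle : ∑ x ∈ t, 2 ^ k x ≤ ∑ x ∈ insert e (t.erase f), 2 ^ k x) : k f < k e := by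
  rw [sum_insert fun h => he (mem_of_mem_erase h), ← add_sum_erase t _ hf] at hle
  have hkle : k f ≤ k e := (Nat.pow_le_pow_iff_right one_lt_two).1 (by omega)
  exact hkle.lt_of_ne fun h => he (hk h ▸ hf)

theorem exists_isMinSpanningTree (hk : Function.Injective k) {h : Finset (Sym2 V)}
    (hc : (fromEdgeSet (h : Set (Sym2 V))).Connected) : ∃ t, IsMinSpanningTree k h t := by
  obtain ⟨t, ht, hmin⟩ := exists_min_image
    (h.powerset.filter fun t : Finset (Sym2 V) => (fromEdgeSet (t : Set (Sym2 V))).Connected)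
    (fun t => ∑ e ∈ t, 2 ^ k e) ⟨h, by simp [hc]⟩
  simp only [mem_filter, mem_powerset, and_imp] at ht hmin
  obtain ⟨hth, htc⟩ := ht
  refine ⟨t, hth, ⟨htc, isAcyclic_iff_forall_adj_isBridge.2 fun x y hxy => ?_⟩,
    fun e he f hf hconn => lt_of_sum_two_pow_le hk hf (mem_sdiff.1 he).2
      (hmin _ (insert_subset (mem_sdiff.1 he).1 ((erase_subset _ _).trans hth)) hconn)⟩
  by_contra hnb
  have hc' := htc.connected_delete_edge_of_not_isBridge hnb
  rw [deleteEdges_fromEdgeSet, ← coe_erase] at hc'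
  exact (hmin _ ((erase_subset _ _).trans hth) hc').not_gt
    (sum_erase_lt_of_pos ((fromEdgeSet_adj _).1 hxy).1 (by positivity))

theorem IsMinSpanningTree.exists_lt {h t t' : Finset (Sym2 V)} (ht : IsMinSpanningTree k h t)
    (ht' : IsMinSpanningTree k h t') {e : Sym2 V} (he : e ∈ t' \ t) (hdiag : ¬e.IsDiag) :
    ∃ f ∈ t \ t', k f < k e := by
  induction e using Sym2.ind with | _ u v => ?_
  rw [mem_sdiff] at he
  have hbridge : (fromEdgeSet ↑t').IsBridge s(u, v) :=
    isAcyclic_iff_forall_adj_isBridge.1 ht'.isTree.isAcyclic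
      ((fromEdgeSet_adj _).2 ⟨he.1, hdiag⟩)
  obtain ⟨a, b, hab, hab', hconn⟩ := ht.isTree.connected.exists_exchange hbridge
    fun huv => he.2 ((fromEdgeSet_adj _).1 huv).1
  have hf : s(a, b) ∈ t := ((fromEdgeSet_adj _).1 hab).1
  have hf' : s(a, b) ∉ t' := fun hf' => hab' ((fromEdgeSet_adj _).2 ⟨hf', hab.ne⟩)
  refine ⟨s(a, b), mem_sdiff.2 ⟨hf, hf'⟩,
    ht.isExternallyActive _ (mem_sdiff.2 ⟨ht'.subset he.1, he.2⟩) _ hf ?_⟩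
  rwa [fromEdgeSet_insert_erase]

theorem IsMinSpanningTree.unique {h t t' : Finset (Sym2 V)} (hh : ∀ e ∈ h, ¬e.IsDiag)
    (ht : IsMinSpanningTree k h t) (ht' : IsMinSpanningTree k h t') : t = t' := by
  by_contra hne
  obtain ⟨e, he, hmin⟩ := exists_min_image (t ∆ t') k (symmDiff_nonempty.2 hne)
  rcases mem_symmDiff.1 he with he | he
  · obtain ⟨f, hf, hlt⟩ := ht'.exists_lt ht (mem_sdiff.2 he) (hh e (ht.subset he.1))
    exact (hmin f (mem_symmDiff.2 (Or.inr (mem_sdiff.1 hf)))).not_gt hlt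
  · obtain ⟨f, hf, hlt⟩ := ht.exists_lt ht' (mem_sdiff.2 he) (hh e (ht'.subset he.1))
    exact (hmin f (mem_symmDiff.2 (Or.inl (mem_sdiff.1 hf)))).not_gt hlt

end MinSpanningTree

section Partition

variable [Fintype V] [DecidableEq V] (k : Sym2 V → ℕ) (G : SimpleGraph V)

noncomputable def externallyActiveEdges (t : Finset (Sym2 V)) : Finset (Sym2 V) :=
  (G.edgeFinset \ t).filter (IsExternallyActive k t)

variable {k G}

theorem mem_Icc_externallyActiveEdges_iff {t h : Finset (Sym2 V)}
    (ht : t ∈ G.edgeSubsets IsTree) :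
    h ∈ Icc t (t ∪ externallyActiveEdges k G t) ↔
      h ⊆ G.edgeFinset ∧ IsMinSpanningTree k h t := by
  rw [mem_edgeSubsets] at ht
  rw [mem_Icc]
  constructor
  · rintro ⟨hth, hht⟩
    refine ⟨hht.trans (union_subset ht.1 ((filter_subset _ _).trans sdiff_subset)), hth, ht.2,
      fun e he => ?_⟩
    rw [mem_sdiff] at he
    exact (mem_filter.1 ((mem_union.1 (hht he.1)).resolve_left he.2)).2
  · rintro ⟨hhG, hth, -, hact⟩
    refine ⟨hth, fun e he => ?_⟩
    by_cases het : e ∈ t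
    · exact mem_union_left _ het
    · exact mem_union_right _ (mem_filter.2
        ⟨mem_sdiff.2 ⟨hhG he, het⟩, hact e (mem_sdiff.2 ⟨he, het⟩)⟩)

theorem edgeSubsets_connected_eq_biUnion (hk : Function.Injective k) :
    G.edgeSubsets Connected =
      (G.edgeSubsets IsTree).biUnion fun t => Icc t (t ∪ externallyActiveEdges k G t) := by
  ext h
  rw [mem_biUnion, mem_edgeSubsets]
  constructor
  · rintro ⟨hhG, hc⟩
    obtain ⟨t, ht⟩ := exists_isMinSpanningTree hk hc
    have htG : t ∈ G.edgeSubsets IsTree := mem_edgeSubsets.2 ⟨ht.subset.trans hhG, ht.isTree⟩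
    exact ⟨t, htG, (mem_Icc_externallyActiveEdges_iff htG).2 ⟨hhG, ht⟩⟩
  · rintro ⟨t, ht, hh⟩
    obtain ⟨hhG, hth, htree, -⟩ := (mem_Icc_externallyActiveEdges_iff ht).1 hh
    exact ⟨hhG, htree.connected.mono (fromEdgeSet_mono (coe_subset.2 hth))⟩

theorem pairwiseDisjoint_Icc_externallyActiveEdges :
    (G.edgeSubsets IsTree : Set (Finset (Sym2 V))).PairwiseDisjoint
      fun t => Icc t (t ∪ externallyActiveEdges k G t) := by
  intro t ht t' ht' hne
  refine Finset.disjoint_left.2 fun h hh hh' => hne ?_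
  obtain ⟨hhG, hmst⟩ := (mem_Icc_externallyActiveEdges_iff ht).1 hh
  exact hmst.unique (fun e he => G.not_isDiag_of_mem_edgeSet (mem_edgeFinset.1 (hhG he)))
    ((mem_Icc_externallyActiveEdges_iff ht').1 hh').2

end Partition

end SimpleGraph

open SimpleGraph in
theorem ursell_bound_general {V : Type*} [Fintype V] [DecidableEq V]
    (G : SimpleGraph V) :
    |∑ H ∈ (Finset.univ : Finset (SimpleGraph V)).filter
        (fun H => H ≤ G ∧ H.Connected),
        (-1 : ℤ) ^ H.edgeFinset.card| ≤
      ((Finset.univ : Finset (SimpleGraph V)).filter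
        (fun T => T ≤ G ∧ T.IsTree)).card := by
  let k : Sym2 V → ℕ := fun e => Fintype.equivFin (Sym2 V) e
  have hk : Function.Injective k := Fin.val_injective.comp (Fintype.equivFin _).injective
  rw [sum_filter_le_eq_sum_edgeSubsets G Connected (fun s => (-1 : ℤ) ^ #s),
    card_filter_le_eq_card_edgeSubsets, edgeSubsets_connected_eq_biUnion hk,
    sum_biUnion pairwiseDisjoint_Icc_externallyActiveEdges]
  calc _ ≤ ∑ t ∈ G.edgeSubsets IsTree,
          |∑ h ∈ Icc t (t ∪ externallyActiveEdges k G t), (-1 : ℤ) ^ #h| :=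
        abs_sum_le_sum_abs _ _
    _ ≤ ∑ t ∈ G.edgeSubsets IsTree, 1 := sum_le_sum fun t _ => by
        rw [sum_Icc_neg_one_pow_card subset_union_left]
        split_ifs <;> simp
    _ = #(G.edgeSubsets IsTree) := by simp

/-- The alternating sum of `(-1)^{|E(g)|}` over connected spanning subgraphs `g` of a finite
connected graph `G` on at least two vertices is bounded in absolute value by the number of
spanning trees of `G` (Rota / Ursell function bound). -/
theorem ursell_bound {V : Type*} [Fintype V] [DecidableEq V]
    (G : SimpleGraph V) (hG : G.Connected) (hV : 2 ≤ Fintype.card V) :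
    |∑ H ∈ (Finset.univ : Finset (SimpleGraph V)).filter
        (fun H => H ≤ G ∧ H.Connected),
        (-1 : ℤ) ^ H.edgeFinset.card| ≤
      ((Finset.univ : Finset (SimpleGraph V)).filter
        (fun T => T ≤ G ∧ T.IsTree)).card :=
  ursell_bound_general G
end

section
/- For every integer $q \geq 1$, $\sum_{T \in \mathfrak{T}(\underline{q})} \prod_{p=1}^{q} d^T(p)! \leq (q-1)! \, 8^q$, where $\mathfrak{T}(\underline{q})$ is the set of trees on the vertex set $\{1, \dots, q\}$ and $d^T(p)$ is the degree of vertex $p$ in $T$. -/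
/-!
Root the tree at a vertex `r`. Every vertex has degree at most its number of children
plus one, so `∏ (deg v)! ≤ 2 ^ (q - 1) * ∏ (children v)!`, and `∏ (children v)!` counts the
ways to order the children of every vertex. A tree with ordered children is determined by the
breadth-first enumeration of its non-root vertices (`(q - 1)!` choices) together with the
multiset of parents (`choose (2q - 2) (q - 1) ≤ 4 ^ (q - 1)` choices): in breadth-first order
the children of each vertex occupy consecutive positions, in the order of their parents.
-/

open scoped Classical

open Finset Nat

theorem Nat.factorial_le_two_pow_mul_factorial {c d : ℕ} (h : d ≤ c + 1) :
    d ! ≤ 2 ^ c * c ! :=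
  calc d ! ≤ (c + 1)! := factorial_le h
    _ = (c + 1) * c ! := factorial_succ c
    _ ≤ 2 ^ c * c ! := Nat.mul_le_mul_right _ Nat.lt_two_pow_self

theorem List.append_singleton_lt_append_singleton_iff {α : Type*} [LinearOrder α]
    {s t : List α} {a b : α} (hst : s.length = t.length) :
    s ++ [a] < t ++ [b] ↔ s < t ∨ s = t ∧ a < b := by
  induction s generalizing t with
  | nil =>
    obtain rfl := List.length_eq_zero_iff.mp hst.symm
    simp [List.cons_lt_cons_iff]
  | cons x s ih =>
    obtain ⟨y, t, rfl⟩ := List.exists_cons_of_length_eq_add_one hst.symm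
    simp only [List.cons_append, List.cons_lt_cons_iff, List.cons.injEq,
      ih (Nat.succ_injective hst)]
    tauto

theorem Finset.card_filter_lt_lt_card_filter_lt_iff {α β : Type*} [Fintype α] [LinearOrder β]
    (f : α → β) {a b : α} : #{x | f x < f a} < #{x | f x < f b} ↔ f a < f b := by
  refine ⟨fun hab => ?_, fun hab => card_lt_card ?_⟩
  · by_contra! hba
    refine hab.not_ge (card_le_card fun x hx => ?_)
    rw [mem_filter] at hx ⊢
    exact ⟨hx.1, hx.2.trans_le hba⟩
  · have hsub : univ.filter (fun x => f x < f a) ⊆ univ.filter (fun x => f x < f b) :=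
      fun x hx => by
        rw [mem_filter] at hx ⊢
        exact ⟨hx.1, hx.2.trans hab⟩
    exact (ssubset_iff_of_subset hsub).2 ⟨a, by simpa using hab, by simp⟩

theorem Finset.eq_and_eq_of_sum_filter_lt_add_eq {α β : Type*} [Fintype α] [LinearOrder β]
    {f : α → β} (hf : Function.Injective f) (c : α → ℕ) {a b : α} {k l : ℕ}
    (hk : k < c a) (hl : l < c b)
    (h : ∑ x with f x < f a, c x + k = ∑ x with f x < f b, c x + l) : a = b ∧ k = l := by
  have hblock : ∀ {a b}, f a < f b →
      ∑ x with f x < f a, c x + c a ≤ ∑ x with f x < f b, c x :=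
    fun {a b} hab => by
      rw [add_comm, ← sum_insert (by simp)]
      refine sum_le_sum_of_subset (insert_subset (by simpa using hab) fun x hx => ?_)
      rw [mem_filter] at hx ⊢
      exact ⟨hx.1, hx.2.trans hab⟩
  rcases lt_trichotomy (f a) (f b) with hab | hab | hab
  · have := hblock hab
    omega
  · exact ⟨hf hab, by rw [hf hab] at h; omega⟩
  · have := hblock hab
    omega

namespace SimpleGraph

variable {V : Type*} {G : SimpleGraph V}

namespace IsTree

variable (hG : G.IsTree) (r : V)

noncomputable def pathToRoot (v : V) : G.Walk v r := (hG.existsUnique_path v r).choose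

/-- Meaningful only for `v ≠ r`; the root is its own `parent`. -/
noncomputable def parent (v : V) : V := (hG.pathToRoot r v).snd

lemma isPath_pathToRoot (v : V) : (hG.pathToRoot r v).IsPath :=
  (hG.existsUnique_path v r).choose_spec.1

lemma eq_pathToRoot {v : V} {p : G.Walk v r} (hp : p.IsPath) : p = hG.pathToRoot r v :=
  (hG.existsUnique_path v r).choose_spec.2 p hp

lemma pathToRoot_root : hG.pathToRoot r r = .nil := (hG.eq_pathToRoot r .nil).symm

lemma adj_parent {v : V} (hv : v ≠ r) : G.Adj v (hG.parent r v) :=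
  Walk.adj_snd (Walk.not_nil_of_ne hv)

lemma pathToRoot_eq_cons {v : V} (hv : v ≠ r) :
    hG.pathToRoot r v = .cons (hG.adj_parent r hv) (hG.pathToRoot r (hG.parent r v)) := by
  have hnil : ¬(hG.pathToRoot r v).Nil := Walk.not_nil_of_ne hv
  conv_lhs =>
    rw [← Walk.cons_tail_eq _ hnil, hG.eq_pathToRoot r (hG.isPath_pathToRoot r v).tail]
  rfl

lemma adj_iff_parent {u v : V} :
    G.Adj u v ↔ (u ≠ r ∧ hG.parent r u = v) ∨ (v ≠ r ∧ hG.parent r v = u) := by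
  refine ⟨fun huv => ?_, ?_⟩
  · by_cases hv : v ∈ (hG.pathToRoot r u).support
    · have hu : u ≠ r := by
        rintro rfl
        simp [pathToRoot_root, huv.ne'] at hv
      exact .inl ⟨hu,
        (hG.isAcyclic.eq_snd_of_adj_start (hG.isPath_pathToRoot r u) huv hv).symm⟩
    · have hp : (Walk.cons huv.symm (hG.pathToRoot r u)).IsPath :=
        (hG.isPath_pathToRoot r u).cons hv
      refine .inr ⟨fun hvr => hv (hvr ▸ Walk.end_mem_support _), ?_⟩
      rw [parent, ← hG.eq_pathToRoot r hp, Walk.snd_cons]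
  · rintro (⟨hu, rfl⟩ | ⟨hv, rfl⟩)
    exacts [hG.adj_parent r hu, (hG.adj_parent r hv).symm]

noncomputable def depth (v : V) : ℕ := (hG.pathToRoot r v).length

lemma depth_eq_zero_iff {v : V} : hG.depth r v = 0 ↔ v = r :=
  ⟨Walk.eq_of_length_eq_zero, fun hv => by subst hv; simp [depth, pathToRoot_root]⟩

lemma depth_of_ne {v : V} (hv : v ≠ r) : hG.depth r v = hG.depth r (hG.parent r v) + 1 := by
  rw [depth, hG.pathToRoot_eq_cons r hv, Walk.length_cons, depth]

lemma eq_of_parent_eq {G' : SimpleGraph V} (hG' : G'.IsTree)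
    (h : ∀ v, v ≠ r → hG.parent r v = hG'.parent r v) : G = G' := by
  ext u v
  rw [hG.adj_iff_parent r, hG'.adj_iff_parent r]
  exact or_congr (and_congr_right fun hu => by rw [h u hu])
    (and_congr_right fun hv => by rw [h v hv])

variable [Fintype V]

noncomputable def children (w : V) : Finset V := {u | u ≠ r ∧ hG.parent r u = w}

lemma mem_children {u w : V} : u ∈ hG.children r w ↔ u ≠ r ∧ hG.parent r u = w := by
  simp [children]

lemma degree_le_card_children_add_one (v : V) : G.degree v ≤ #(hG.children r v) + 1 := by
  rw [← card_neighborFinset_eq_degree]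
  refine (card_le_card fun u hu => ?_).trans (card_insert_le (hG.parent r v) _)
  rw [mem_neighborFinset, hG.adj_iff_parent r] at hu
  rw [mem_insert, mem_children]
  exact hu.imp (fun h => h.2.symm) id

lemma count_map_parent (w : V) :
    ((univ.erase r).val.map (hG.parent r)).count w = #(hG.children r w) := by
  rw [Multiset.count_map, ← filter_val, ← card_def]
  congr 1
  ext u
  simp [mem_children, eq_comm]

lemma sum_card_children : ∑ w, #(hG.children r w) = Fintype.card V - 1 := by
  rw [← Finset.card_univ, ← card_erase_of_mem (mem_univ r),
    card_eq_sum_card_fiberwise (f := hG.parent r) (t := univ)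
      fun _ _ => mem_coe.2 (mem_univ _)]
  congr! 2 with w
  ext u
  simp [mem_children]

lemma prod_factorial_degree_le :
    ∏ v, (G.degree v)! ≤ 2 ^ (Fintype.card V - 1) * ∏ v, (#(hG.children r v))! := by
  calc ∏ v, (G.degree v)! ≤ ∏ v, 2 ^ #(hG.children r v) * (#(hG.children r v))! :=
        prod_le_prod' fun v _ =>
          Nat.factorial_le_two_pow_mul_factorial (hG.degree_le_card_children_add_one r v)
    _ = 2 ^ (Fintype.card V - 1) * ∏ v, (#(hG.children r v))! := by
        rw [prod_mul_distrib, prod_pow_eq_pow_sum, hG.sum_card_children r]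

abbrev ChildOrdering : Type _ := ∀ w, hG.children r w ≃ Fin #(hG.children r w)

lemma card_childOrdering : Fintype.card (hG.ChildOrdering r) = ∏ w, (#(hG.children r w))! := by
  simp [Fintype.card_pi, Fintype.card_equiv (hG.children r _).equivFin]

variable {hG r} (h : hG.ChildOrdering r)

namespace ChildOrdering

noncomputable def rank (v : V) : ℕ :=
  if hv : v = r then 0 else h (hG.parent r v) ⟨v, (hG.mem_children r).2 ⟨hv, rfl⟩⟩

lemma rank_root : h.rank r = 0 := dif_pos rfl

lemma rank_lt_card_children {v : V} (hv : v ≠ r) :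
    h.rank v < #(hG.children r (hG.parent r v)) := by
  rw [rank, dif_neg hv]
  exact Fin.isLt _

lemma rank_eq {u w : V} (hu : u ∈ hG.children r w) : h.rank u = h w ⟨u, hu⟩ := by
  obtain ⟨hur, rfl⟩ := (hG.mem_children r).1 hu
  simp [rank, hur]

lemma rank_injOn (w : V) : Set.InjOn h.rank (hG.children r w) := fun u hu v hv huv => by
  rw [h.rank_eq hu, h.rank_eq hv, Fin.val_inj, (h w).apply_eq_iff_eq] at huv
  exact congrArg Subtype.val huv

lemma card_filter_rank_lt {w : V} {k : ℕ} (hk : k ≤ #(hG.children r w)) :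
    #{u ∈ hG.children r w | h.rank u < k} = k := by
  refine (card_bij (t := range k) (fun u _ => h.rank u)
    (fun u hu => mem_range.2 (mem_filter.1 hu).2)
    (fun u hu v hv => h.rank_injOn w (mem_filter.1 hu).1 (mem_filter.1 hv).1)
    fun j hj => ?_).trans (card_range k)
  have hjc : j < #(hG.children r w) := (mem_range.1 hj).trans_le hk
  refine ⟨(h w).symm ⟨j, hjc⟩, ?_, ?_⟩
  · rw [mem_filter, h.rank_eq (Subtype.mem _), Equiv.apply_symm_apply]
    exact ⟨Subtype.mem _, mem_range.1 hj⟩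
  · rw [h.rank_eq (Subtype.mem _), Equiv.apply_symm_apply]

lemma ext_of_rank_eq {h' : hG.ChildOrdering r} (hrank : ∀ v, h.rank v = h'.rank v) : h = h' := by
  funext w
  ext ⟨u, hu⟩
  obtain ⟨hur, rfl⟩ := (hG.mem_children r).1 hu
  simpa [rank, hur] using hrank u

noncomputable def rankPath (v : V) : List ℕ := ((hG.pathToRoot r v).support.map h.rank).reverse

lemma length_rankPath (v : V) : (h.rankPath v).length = hG.depth r v + 1 := by
  simp [rankPath, depth]

lemma rankPath_of_ne {v : V} (hv : v ≠ r) :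
    h.rankPath v = h.rankPath (hG.parent r v) ++ [h.rank v] := by
  simp [rankPath, hG.pathToRoot_eq_cons r hv]

noncomputable def bfsKey (v : V) : ℕ ×ₗ List ℕ := toLex (hG.depth r v, h.rankPath v)

lemma bfsKey_root_lt {v : V} (hv : v ≠ r) : h.bfsKey r < h.bfsKey v := by
  refine Prod.Lex.toLex_lt_toLex.2 (.inl ?_)
  rw [(hG.depth_eq_zero_iff r).2 rfl]
  exact Nat.pos_of_ne_zero (mt (hG.depth_eq_zero_iff r).1 hv)

lemma bfsKey_lt_bfsKey_iff {u v : V} (hu : u ≠ r) (hv : v ≠ r) :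
    h.bfsKey u < h.bfsKey v ↔ h.bfsKey (hG.parent r u) < h.bfsKey (hG.parent r v) ∨
      h.bfsKey (hG.parent r u) = h.bfsKey (hG.parent r v) ∧ h.rank u < h.rank v := by
  simp only [bfsKey, Prod.Lex.toLex_lt_toLex, toLex_inj, Prod.ext_iff, hG.depth_of_ne r hu,
    hG.depth_of_ne r hv, h.rankPath_of_ne hu, h.rankPath_of_ne hv, Nat.add_lt_add_iff_right,
    Nat.add_right_cancel_iff]
  by_cases hd : hG.depth r (hG.parent r u) = hG.depth r (hG.parent r v)
  · rw [List.append_singleton_lt_append_singleton_iff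
      (by rw [length_rankPath, length_rankPath, hd])]
    tauto
  · simp [hd]

lemma bfsKey_injective : Function.Injective h.bfsKey := by
  suffices ∀ n u v, hG.depth r u = n → h.bfsKey u = h.bfsKey v → u = v from
    fun u v => this _ u v rfl
  intro n
  induction n with
  | zero =>
    intro u v hu huv
    have hv : hG.depth r v = 0 := hu ▸ (congrArg (·.1) huv).symm
    rw [(hG.depth_eq_zero_iff r).1 hu, (hG.depth_eq_zero_iff r).1 hv]
  | succ n ih =>
    intro u v hu huv
    have hv : hG.depth r v = n + 1 := hu ▸ (congrArg (·.1) huv).symm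
    have hur : u ≠ r := fun h => by simp [(hG.depth_eq_zero_iff r).2 h] at hu
    have hvr : v ≠ r := fun h => by simp [(hG.depth_eq_zero_iff r).2 h] at hv
    have hdu := hG.depth_of_ne r hur
    have hdv := hG.depth_of_ne r hvr
    simp only [bfsKey, toLex_inj, Prod.ext_iff, h.rankPath_of_ne hur, h.rankPath_of_ne hvr] at huv
    obtain ⟨hpath, hrank⟩ := List.append_inj' huv.2 rfl
    have hpar : hG.parent r u = hG.parent r v :=
      ih _ _ (by omega) (by simp only [bfsKey, toLex_inj, Prod.ext_iff, hpath, and_true]; omega)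
    exact h.rank_injOn _ ((hG.mem_children r).2 ⟨hur, hpar⟩)
      ((hG.mem_children r).2 ⟨hvr, rfl⟩) (by simpa using hrank)

noncomputable def bfsIndex (v : V) : ℕ := #{u | h.bfsKey u < h.bfsKey v}

lemma bfsIndex_lt_bfsIndex_iff {u v : V} :
    h.bfsIndex u < h.bfsIndex v ↔ h.bfsKey u < h.bfsKey v :=
  card_filter_lt_lt_card_filter_lt_iff h.bfsKey

lemma bfsIndex_injective : Function.Injective h.bfsIndex := fun u v huv => by
  rcases lt_trichotomy (h.bfsKey u) (h.bfsKey v) with hlt | heq | hlt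
  · exact absurd huv (h.bfsIndex_lt_bfsIndex_iff.2 hlt).ne
  · exact h.bfsKey_injective heq
  · exact absurd huv (h.bfsIndex_lt_bfsIndex_iff.2 hlt).ne'

lemma bfsIndex_root : h.bfsIndex r = 0 := by
  refine card_eq_zero.2 (filter_eq_empty_iff.2 fun u _ hu => ?_)
  by_cases hur : u = r
  · exact hu.ne (congrArg h.bfsKey hur)
  · exact hu.not_gt (h.bfsKey_root_lt hur)

lemma bfsIndex_eq_zero_iff {v : V} : h.bfsIndex v = 0 ↔ v = r := by
  rw [← h.bfsIndex_root, h.bfsIndex_injective.eq_iff]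

lemma bfsIndex_lt_card (v : V) : h.bfsIndex v < Fintype.card V :=
  card_lt_univ_of_notMem (x := v) (by simp)

lemma bfsIndex_eq {v : V} (hv : v ≠ r) :
    h.bfsIndex v = ∑ w with h.bfsIndex w < h.bfsIndex (hG.parent r v), #(hG.children r w) +
      h.rank v + 1 := by
  set p := hG.parent r v
  set older : Finset V := {u | u ≠ r ∧ h.bfsKey (hG.parent r u) < h.bfsKey p}
  set elderSiblings : Finset V := {u ∈ hG.children r p | h.rank u < h.rank v}
  have hsplit : ({u | h.bfsKey u < h.bfsKey v} : Finset V) =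
      insert r (older ∪ elderSiblings) := by
    ext u
    by_cases hur : u = r
    · simp [hur, h.bfsKey_root_lt hv]
    · simp [older, elderSiblings, hur, hG.mem_children r, h.bfsKey_lt_bfsKey_iff hur hv,
        h.bfsKey_injective.eq_iff, p]
  have hdisj : Disjoint older elderSiblings :=
    Finset.disjoint_left.2 fun u hu hu' => by
      simp only [older, elderSiblings, mem_filter, mem_univ, true_and, mem_children] at hu hu'
      exact hu.2.ne (by rw [hu'.1.2])
  have hfibers : #older = ∑ w with h.bfsIndex w < h.bfsIndex p, #(hG.children r w) := by
    rw [card_eq_sum_card_fiberwise (f := hG.parent r) (t := {w | h.bfsIndex w < h.bfsIndex p})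
      fun u hu => by simpa [older, h.bfsIndex_lt_bfsIndex_iff] using (mem_filter.1 hu).2.2]
    refine sum_congr rfl fun w hw => congrArg card (ext fun u => ?_)
    rw [mem_filter, h.bfsIndex_lt_bfsIndex_iff] at hw
    simp only [older, mem_filter, mem_univ, true_and, mem_children]
    constructor
    · exact fun hu => ⟨hu.1.1, hu.2⟩
    · rintro ⟨hur, rfl⟩
      exact ⟨⟨hur, hw.2⟩, rfl⟩
  rw [bfsIndex, hsplit, card_insert_of_notMem (by simp [older, elderSiblings, mem_children]),
    card_union_of_disjoint hdisj, hfibers, h.card_filter_rank_lt (h.rank_lt_card_children hv).le]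

noncomputable def bfsEquiv : {v // v ≠ r} ≃ Fin (Fintype.card V - 1) :=
  Equiv.ofBijective
    (fun v => (⟨h.bfsIndex v - 1, by
      have := h.bfsIndex_lt_card v
      have := mt h.bfsIndex_eq_zero_iff.1 v.2
      omega⟩ : Fin (Fintype.card V - 1)))
    ((Fintype.bijective_iff_injective_and_card _).2 ⟨fun u v huv => by
      have hu := mt h.bfsIndex_eq_zero_iff.1 u.2
      have hv := mt h.bfsIndex_eq_zero_iff.1 v.2
      exact Subtype.ext (h.bfsIndex_injective (by simp only [Fin.mk.injEq] at huv; omega)),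
      by simp⟩)

lemma bfsEquiv_add_one {v : V} (hv : v ≠ r) :
    (h.bfsEquiv ⟨v, hv⟩ : ℕ) + 1 = h.bfsIndex v := by
  have := mt h.bfsIndex_eq_zero_iff.1 hv
  simp only [bfsEquiv, Equiv.ofBijective_apply]
  omega

end ChildOrdering

end IsTree

variable [Fintype V] (r : V)

abbrev OrderedTree : Type _ := Σ T : {T : SimpleGraph V // T.IsTree}, T.2.ChildOrdering r

namespace OrderedTree

noncomputable def encode (x : OrderedTree r) :
    ({v // v ≠ r} ≃ Fin (Fintype.card V - 1)) × Sym V (Fintype.card V - 1) :=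
  (x.2.bfsEquiv, ⟨(univ.erase r).val.map (x.1.2.parent r), by simp⟩)

lemma encode_injective : Function.Injective (encode r) := by
  rintro ⟨⟨T, hT⟩, h⟩ ⟨⟨T', hT'⟩, h'⟩ heq
  have he : h.bfsEquiv = h'.bfsEquiv := congrArg Prod.fst heq
  have hm : (univ.erase r).val.map (hT.parent r) = (univ.erase r).val.map (hT'.parent r) :=
    congrArg (fun x => (x.2 : Multiset V)) heq
  have hidx : ∀ v, h'.bfsIndex v = h.bfsIndex v := fun v => by
    by_cases hv : v = r
    · rw [hv, h.bfsIndex_root, h'.bfsIndex_root]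
    · rw [← h.bfsEquiv_add_one hv, ← h'.bfsEquiv_add_one hv, he]
  have hchildren : ∀ w, #(hT'.children r w) = #(hT.children r w) := fun w => by
    rw [← hT.count_map_parent, ← hT'.count_map_parent, hm]
  -- Both trees place `v` at the same position, which lies in the block of its parent.
  have hparent : ∀ v, v ≠ r → hT.parent r v = hT'.parent r v ∧ h.rank v = h'.rank v := by
    intro v hv
    have hpos := h.bfsIndex_eq hv
    have hpos' := h'.bfsIndex_eq hv
    simp only [hidx, hchildren] at hpos'
    have hlt' := h'.rank_lt_card_children hv
    rw [hchildren] at hlt'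
    exact eq_and_eq_of_sum_filter_lt_add_eq h.bfsIndex_injective (fun w => #(hT.children r w))
      (h.rank_lt_card_children hv) hlt' (by omega)
  obtain rfl := hT.eq_of_parent_eq r hT' fun v hv => (hparent v hv).1
  have hh : h = h' := h.ext_of_rank_eq fun v => by
    by_cases hv : v = r
    · rw [hv, h.rank_root, h'.rank_root]
    · exact (hparent v hv).2
  exact Sigma.ext rfl (heq_of_eq hh)

lemma card_le :
    Fintype.card (OrderedTree r) ≤ (Fintype.card V - 1)! * 4 ^ (Fintype.card V - 1) := by
  have hV : 0 < Fintype.card V := Fintype.card_pos_iff.2 ⟨r⟩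
  refine (Fintype.card_le_of_injective _ (encode_injective r)).trans ?_
  rw [Fintype.card_prod, Fintype.card_equiv (Fintype.equivOfCardEq (by simp)),
    Sym.card_sym_eq_choose]
  simp only [Fintype.card_subtype_compl, Fintype.card_unique]
  refine Nat.mul_le_mul_left _ ((le_of_eq ?_).trans (Nat.centralBinom_le_four_pow _))
  rw [Nat.centralBinom, two_mul]
  congr 1
  omega

end OrderedTree

theorem sum_isTree_prod_factorial_degree_le :
    ∑ T : {T : SimpleGraph V // T.IsTree}, ∏ v, (T.1.degree v)! ≤
      (Fintype.card V - 1)! * 8 ^ (Fintype.card V - 1) := by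
  rcases isEmpty_or_nonempty V with hV | hV
  · have : IsEmpty {T : SimpleGraph V // T.IsTree} :=
      ⟨fun T => hV.elim T.2.connected.nonempty.some⟩
    simp
  obtain ⟨r⟩ := hV
  calc ∑ T : {T : SimpleGraph V // T.IsTree}, ∏ v, (T.1.degree v)!
      ≤ ∑ T : {T : SimpleGraph V // T.IsTree},
          2 ^ (Fintype.card V - 1) * Fintype.card (T.2.ChildOrdering r) :=
        sum_le_sum fun T _ => (T.2.card_childOrdering r) ▸ T.2.prod_factorial_degree_le r
    _ = 2 ^ (Fintype.card V - 1) * Fintype.card (OrderedTree r) := by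
        rw [← mul_sum, Fintype.card_sigma]
    _ ≤ 2 ^ (Fintype.card V - 1) * ((Fintype.card V - 1)! * 4 ^ (Fintype.card V - 1)) :=
        Nat.mul_le_mul_left _ (OrderedTree.card_le r)
    _ = (Fintype.card V - 1)! * 8 ^ (Fintype.card V - 1) := by
        rw [show 8 = 2 * 4 by rfl, mul_pow]
        ring

end SimpleGraph

theorem sum_trees_degree_factorial_bound_general (q : ℕ) :
    ∑ T : {T : SimpleGraph (Fin q) // T.IsTree},
        ∏ p : Fin q, ((T : SimpleGraph (Fin q)).degree p).factorial ≤
      (q - 1).factorial * 8 ^ q := by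
  have h := SimpleGraph.sum_isTree_prod_factorial_degree_le (V := Fin q)
  rw [Fintype.card_fin] at h
  -- `convert` reconciles the statement's decidability instances with the classical ones.
  convert Nat.le_trans h (Nat.mul_le_mul_left _ (Nat.pow_le_pow_right (by norm_num) (sub_le q 1)))

/-- The sum over all labeled trees `T` on `{1,…,q}` of the product of the factorials of
the vertex degrees of `T` is at most `(q-1)! · 8^q`. -/
theorem sum_trees_degree_factorial_bound (q : ℕ) (hq : 1 ≤ q) :
    ∑ T : {T : SimpleGraph (Fin q) // T.IsTree},
        ∏ p : Fin q, ((T : SimpleGraph (Fin q)).degree p).factorial ≤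
      (q - 1).factorial * 8 ^ q :=
  sum_trees_degree_factorial_bound_general q
end

section
/- Let $A$ be a real symmetric $n \times n$ matrix and let $B$ be a real positive semidefinite symmetric $n \times n$ matrix with $B_{ii} = 1$ for all $i$. Then every eigenvalue of the Hadamard (entrywise) product $A \circ B$ lies in the interval $[\lambda_{\min}(A), \lambda_{\max}(A)]$. More precisely, each eigenvalue of $A \circ B$ is a convex combination of the eigenvalues of $A$. -/
open Matrix

/-!
Let `v` be a unit eigenvector of `A ⊙ B` for `μ` and `A = ∑ⱼ λⱼ uⱼ uⱼᵀ` a spectral decomposition.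
The quadratic form `M ↦ vᵀ (M ⊙ B) v` is linear in `M` and sends `uⱼ uⱼᵀ` to
`(uⱼ ⊙ v)ᵀ B (uⱼ ⊙ v) ≥ 0`. Hence `μ = vᵀ (A ⊙ B) v = ∑ⱼ λⱼ wⱼ` with weights `wⱼ ≥ 0`, and since
`∑ⱼ uⱼ uⱼᵀ = 1` the weights sum to `vᵀ (1 ⊙ B) v = ∑ₖ Bₖₖ vₖ² = 1`.
-/

theorem OrthonormalBasis.sum_vecMulVec_star_self_eq_one {𝕜 n : Type*} [RCLike 𝕜] [Fintype n]
    [DecidableEq n] (b : OrthonormalBasis n 𝕜 (EuclideanSpace 𝕜 n)) :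
    ∑ j, vecMulVec ⇑(b j) (star ⇑(b j)) = 1 := by
  ext k l
  have h := congr($(b.sum_repr' (EuclideanSpace.single l 1)) k)
  simp only [EuclideanSpace.inner_single_right, one_mul] at h
  simpa [Matrix.sum_apply, vecMulVec_apply, mul_comm, Matrix.one_apply, Pi.single_apply] using h

theorem sum_mul_mem_Icc_iInf_iSup {ι : Type*} [Fintype ι] {w : ι → ℝ} (hw₀ : ∀ i, 0 ≤ w i)
    (hw₁ : ∑ i, w i = 1) (f : ι → ℝ) : ∑ i, w i * f i ∈ Set.Icc (⨅ i, f i) (⨆ i, f i) := by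
  have hlo i : ⨅ i, f i ≤ f i := ciInf_le (Set.finite_range f).bddBelow i
  have hhi i : f i ≤ ⨆ i, f i := le_ciSup (Set.finite_range f).bddAbove i
  constructor
  · calc ⨅ i, f i = ∑ i, w i * ⨅ i, f i := by rw [← Finset.sum_mul, hw₁, one_mul]
      _ ≤ ∑ i, w i * f i :=
        Finset.sum_le_sum fun i _ => mul_le_mul_of_nonneg_left (hlo i) (hw₀ i)
  · calc ∑ i, w i * f i ≤ ∑ i, w i * ⨆ i, f i :=
        Finset.sum_le_sum fun i _ => mul_le_mul_of_nonneg_left (hhi i) (hw₀ i)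
      _ = ⨆ i, f i := by rw [← Finset.sum_mul, hw₁, one_mul]

namespace Matrix

variable {n : Type*} [Fintype n] [DecidableEq n]

theorem IsHermitian.eq_sum_eigenvalues_smul_vecMulVec {𝕜 : Type*} [RCLike 𝕜]
    {A : Matrix n n 𝕜} (hA : A.IsHermitian) :
    A = ∑ j, (hA.eigenvalues j : 𝕜) •
      vecMulVec ⇑(hA.eigenvectorBasis j) (star ⇑(hA.eigenvectorBasis j)) := by
  conv_lhs => rw [← A.mul_one, ← hA.eigenvectorBasis.sum_vecMulVec_star_self_eq_one]
  simp only [Matrix.mul_sum, mul_vecMulVec, hA.mulVec_eigenvectorBasis, smul_vecMulVec,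
    RCLike.real_smul_eq_coe_smul (K := 𝕜)]

theorem dotProduct_vecMulVec_hadamard_mulVec {R : Type*} [CommSemiring R]
    (u w v : n → R) (B : Matrix n n R) :
    v ⬝ᵥ (vecMulVec u w ⊙ B) *ᵥ v = (u * v) ⬝ᵥ B *ᵥ (w * v) := by
  have hdiag : vecMulVec u w ⊙ B = diagonal u * B * diagonal w := by
    ext k l
    simp [vecMulVec_apply, mul_comm, mul_left_comm]
  have hu : v ᵥ* diagonal u = u * v := funext fun k => by simp [vecMul_diagonal, mul_comm]
  have hw : diagonal w *ᵥ v = w * v := funext (mulVec_diagonal w v)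
  rw [hdiag, ← mulVec_mulVec, ← mulVec_mulVec, dotProduct_mulVec, hu, hw]

def hadamardQuadForm {R : Type*} [CommSemiring R] (B : Matrix n n R) (v : n → R) :
    Matrix n n R →ₗ[R] R where
  toFun M := v ⬝ᵥ (M ⊙ B) *ᵥ v
  map_add' M N := by simp [add_hadamard, add_mulVec, dotProduct_add]
  map_smul' c M := by simp [smul_hadamard, smul_mulVec, dotProduct_smul]

namespace IsHermitian

variable {A : Matrix n n ℝ} (hA : A.IsHermitian) (B : Matrix n n ℝ) (v : n → ℝ)

noncomputable def hadamardWeight (j : n) : ℝ :=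
  (⇑(hA.eigenvectorBasis j) * v) ⬝ᵥ B *ᵥ (⇑(hA.eigenvectorBasis j) * v)

theorem hadamardQuadForm_vecMulVec_eigenvectorBasis (j : n) :
    hadamardQuadForm B v (vecMulVec ⇑(hA.eigenvectorBasis j) (star ⇑(hA.eigenvectorBasis j))) =
      hA.hadamardWeight B v j := by
  rw [star_trivial]
  exact dotProduct_vecMulVec_hadamard_mulVec _ _ v B

theorem hadamardWeight_nonneg {B : Matrix n n ℝ} (hB : B.PosSemidef) (j : n) :
    0 ≤ hA.hadamardWeight B v j := by
  have h := hB.dotProduct_mulVec_nonneg (⇑(hA.eigenvectorBasis j) * v)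
  rwa [star_trivial] at h

theorem sum_hadamardWeight {B : Matrix n n ℝ} (hBdiag : ∀ i, B i i = 1) :
    ∑ j, hA.hadamardWeight B v j = v ⬝ᵥ v := by
  have hB1 : diagonal B.diag = 1 := by
    rw [← diagonal_one]
    exact congrArg diagonal (funext hBdiag)
  calc ∑ j, hA.hadamardWeight B v j = hadamardQuadForm B v 1 := by
        simp only [← hA.hadamardQuadForm_vecMulVec_eigenvectorBasis, ← map_sum,
          hA.eigenvectorBasis.sum_vecMulVec_star_self_eq_one]
    _ = v ⬝ᵥ v := by simp [hadamardQuadForm, one_hadamard, hB1]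

theorem sum_eigenvalues_mul_hadamardWeight :
    ∑ j, hA.eigenvalues j * hA.hadamardWeight B v j = v ⬝ᵥ (A ⊙ B) *ᵥ v := by
  calc ∑ j, hA.eigenvalues j * hA.hadamardWeight B v j = hadamardQuadForm B v A := by
        conv_rhs => rw [hA.eq_sum_eigenvalues_smul_vecMulVec]
        simp only [map_sum, map_smul, hA.hadamardQuadForm_vecMulVec_eigenvectorBasis,
          RCLike.ofReal_real_eq_id, id_eq, smul_eq_mul]
    _ = v ⬝ᵥ (A ⊙ B) *ᵥ v := rfl

theorem dotProduct_self_eigenvectorBasis (i : n) :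
    ⇑(hA.eigenvectorBasis i) ⬝ᵥ ⇑(hA.eigenvectorBasis i) = 1 := by
  have h := hA.eigenvectorBasis.inner_eq_one i
  rwa [EuclideanSpace.inner_eq_star_dotProduct, star_trivial] at h

end IsHermitian

end Matrix

/-- Each eigenvalue of the Hadamard product `A ∘ B`, with `A` real symmetric and `B`
positive semidefinite with unit diagonal, is a convex combination of the eigenvalues of `A`;
in particular it lies in `[λmin A, λmax A]`. -/
theorem hadamard_eigenvalues_convex {n : Type*} [Fintype n] [DecidableEq n]
    (A B : Matrix n n ℝ) (hA : A.IsHermitian) (hB : B.PosSemidef)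
    (hBdiag : ∀ i, B i i = 1) (hAB : (Matrix.hadamard A B).IsHermitian) :
    ∀ i,
      (∃ w : n → ℝ, (∀ j, 0 ≤ w j) ∧ ∑ j, w j = 1 ∧
          hAB.eigenvalues i = ∑ j, w j * hA.eigenvalues j) ∧
        hAB.eigenvalues i ∈ Set.Icc (⨅ j, hA.eigenvalues j) (⨆ j, hA.eigenvalues j) := by
  intro i
  set v := ⇑(hAB.eigenvectorBasis i)
  have hv : v ⬝ᵥ v = 1 := hAB.dotProduct_self_eigenvectorBasis i
  have hw₀ := hA.hadamardWeight_nonneg v hB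
  have hw₁ : ∑ j, hA.hadamardWeight B v j = 1 := (hA.sum_hadamardWeight v hBdiag).trans hv
  have hμ : hAB.eigenvalues i = ∑ j, hA.hadamardWeight B v j * hA.eigenvalues j := by
    simp_rw [mul_comm _ (hA.eigenvalues _)]
    rw [hA.sum_eigenvalues_mul_hadamardWeight, hAB.mulVec_eigenvectorBasis, dotProduct_smul,
      hv, smul_eq_mul, mul_one]
  refine ⟨⟨_, hw₀, hw₁, hμ⟩, ?_⟩
  rw [hμ]
  exact sum_mul_mem_Icc_iInf_iSup hw₀ hw₁ _
end

section
/- Let $R$ and $I$ be real symmetric $n \times n$ matrices with $R$ positive definite, and set $C = R + iI$ (a complex symmetric matrix). Then $C$ is invertible and the real part of its inverse satisfies $\mathrm{Re}(C^{-1}) = \left( R + I R^{-1} I \right)^{-1}$. In particular $\mathrm{Re}(C^{-1})$ is positive definite. -/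
open Matrix

/-!
Writing `S = R + I R⁻¹ I`, which is positive definite because `I R⁻¹ I = Iᴴ R⁻¹ I` is positive
semidefinite, a direct computation shows that `S⁻¹ - i R⁻¹ I S⁻¹` is a right inverse of
`R + iI`. Its real part is `S⁻¹`.
-/

lemma Matrix.map_re_ofReal_sub_I_smul {m p : Type*} (P Q : Matrix m p ℝ) :
    (P.map Complex.ofReal - Complex.I • Q.map Complex.ofReal).map Complex.re = P := by
  ext i j
  simp

section

variable {n : Type*} [Fintype n] [DecidableEq n]

lemma Matrix.PosDef.add_mul_inv_mul {K : Type*} [Field K] [PartialOrder K] [StarRing K]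
    [AddLeftMono K] {R I : Matrix n n K} (hR : R.PosDef) (hI : I.IsHermitian) :
    (R + I * R⁻¹ * I).PosDef := by
  refine hR.add_posSemidef ?_
  simpa only [hI.eq] using hR.inv.posSemidef.conjTranspose_mul_mul_same I

lemma Matrix.map_ofReal_add_I_smul_mul_eq_one {R I P Q : Matrix n n ℝ} (hre : R * P + I * Q = 1)
    (him : I * P = R * Q) :
    (R.map Complex.ofReal + Complex.I • I.map Complex.ofReal) *
      (P.map Complex.ofReal - Complex.I • Q.map Complex.ofReal) = 1 := by
  set f := (Complex.ofRealHom : ℝ →+* ℂ).mapMatrix (m := n)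
  change (f R + Complex.I • f I) * (f P - Complex.I • f Q) = 1
  have hexpand : (f R + Complex.I • f I) * (f P - Complex.I • f Q)
      = f (R * P + I * Q) + Complex.I • f (I * P - R * Q) := by
    simp only [map_add, map_sub, map_mul, add_mul, mul_sub, smul_mul_assoc, mul_smul_comm,
      smul_smul, Complex.I_mul_I, neg_one_smul, smul_sub, smul_add]
    abel
  rw [hexpand, hre, him, sub_self, map_one, map_zero, smul_zero, add_zero]

end

/-- For `C = R + iI` with `R` real symmetric positive definite and `I` real symmetric,
`C` is invertible, `Re (C⁻¹) = (R + I R⁻¹ I)⁻¹`, and `Re (C⁻¹)` is positive definite. -/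
theorem re_inv_of_complex_symmetric {n : Type*} [Fintype n] [DecidableEq n]
    (R I : Matrix n n ℝ) (hR : R.PosDef) (hI : I.IsHermitian)
    (C : Matrix n n ℂ)
    (hC : C = R.map (Complex.ofReal) + Complex.I • I.map (Complex.ofReal)) :
    IsUnit C.det ∧ C⁻¹.map Complex.re = (R + I * R⁻¹ * I)⁻¹ ∧
      (C⁻¹.map Complex.re).PosDef := by
  set S := R + I * R⁻¹ * I
  have hS : S.PosDef := hR.add_mul_inv_mul hI
  have hre : R * S⁻¹ + I * (R⁻¹ * I * S⁻¹) = 1 := by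
    simp only [← Matrix.mul_assoc, ← Matrix.add_mul]
    exact mul_nonsing_inv S ((isUnit_iff_isUnit_det S).1 hS.isUnit)
  have him : I * S⁻¹ = R * (R⁻¹ * I * S⁻¹) := by
    rw [← Matrix.mul_assoc, ← Matrix.mul_assoc,
      mul_nonsing_inv R ((isUnit_iff_isUnit_det R).1 hR.isUnit), Matrix.one_mul]
  have hmul := map_ofReal_add_I_smul_mul_eq_one hre him
  rw [← hC] at hmul
  have hCre : C⁻¹.map Complex.re = S⁻¹ := by
    rw [inv_eq_right_inv hmul, map_re_ofReal_sub_I_smul]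
  exact ⟨isUnit_det_of_right_inverse hmul, hCre, hCre ▸ hS.inv⟩
end

section
/- Let $R$ and $I$ be real symmetric $n \times n$ matrices with $R$ positive definite, and set $C = R + iI$. Then $\lambda_{\max}\big(\mathrm{Re}(C^{-1})\big) \leq \lambda_{\min}(R)^{-1}$ and $\lambda_{\max}(R) \leq \lambda_{\min}\big(\mathrm{Re}(C^{-1})\big)^{-1}$. -/
/-!
For real `x` let `y = C⁻¹x` and `a = Re(C⁻¹) x = Re y`. Since `I` is symmetric, `y* I y` is real,
hence `xᵀa = Re(y* C y) = (Re y)ᵀ R (Re y) + (Im y)ᵀ R (Im y) ≥ λ_min(R) |a|²`.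
Together with `xᵀa ≤ |x| |a|` this gives `xᵀ Re(C⁻¹) x ≤ λ_min(R)⁻¹ |x|²` (the first bound) and
shows that `Re(C⁻¹)` is positive definite. The second bound is the first one applied to
`C⁻¹ = Re(C⁻¹) + i Im(C⁻¹)`, whose imaginary part is symmetric because `C` is, and whose inverse
has real part `R`.
-/

open Matrix

theorem dotProduct_self_nonneg {n K : Type*} [Fintype n] [Ring K] [LinearOrder K]
    [IsStrictOrderedRing K] (v : n → K) : 0 ≤ v ⬝ᵥ v :=
  Fintype.sum_nonneg fun i => mul_self_nonneg (v i)

theorem dotProduct_le_inv_mul_of_mul_le {n K : Type*} [Fintype n] [Field K] [LinearOrder K]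
    [IsStrictOrderedRing K] {x a : n → K} {r : K} (hr : 0 < r) (h : r * (a ⬝ᵥ a) ≤ x ⬝ᵥ a) :
    x ⬝ᵥ a ≤ r⁻¹ * (x ⬝ᵥ x) := by
  have hsq := dotProduct_self_nonneg (r • a - x)
  simp only [sub_dotProduct, dotProduct_sub, smul_dotProduct, dotProduct_smul, smul_eq_mul,
    dotProduct_comm a x] at hsq
  rw [inv_mul_eq_div, le_div_iff₀ hr]
  nlinarith [mul_le_mul_of_nonneg_left h hr.le]

namespace Matrix

variable {m n : Type*}

theorem map_re_add_I_smul_map_im (D : Matrix m n ℂ) :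
    (D.map Complex.re).map Complex.ofReal + Complex.I • (D.map Complex.im).map Complex.ofReal
      = D := by
  ext j k
  simpa [mul_comm] using Complex.re_add_im (D j k)

variable [Fintype n]

theorem map_re_mulVec (D : Matrix m n ℂ) (x : n → ℝ) :
    D.map Complex.re *ᵥ x = Complex.re ∘ (D *ᵥ (Complex.ofReal ∘ x)) := by
  ext j
  simp [mulVec, dotProduct, Complex.re_sum]

theorem IsSymm.dotProduct_mulVec_comm {α : Type*} [CommSemiring α] {A : Matrix n n α}
    (hA : A.IsSymm) (x y : n → α) : x ⬝ᵥ A *ᵥ y = y ⬝ᵥ A *ᵥ x := by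
  rw [dotProduct_mulVec, ← mulVec_transpose, hA.eq, dotProduct_comm]

section Rayleigh

open scoped MatrixOrder

variable [DecidableEq n] {A : Matrix n n ℝ} (hA : A.IsHermitian) {r : ℝ}
include hA

theorem IsHermitian.forall_eigenvalues_le_iff :
    (∀ i, hA.eigenvalues i ≤ r) ↔ ∀ x, x ⬝ᵥ A *ᵥ x ≤ r * (x ⬝ᵥ x) := by
  rw [← Set.forall_mem_range (p := (· ≤ r)), ← hA.spectrum_real_eq_range_eigenvalues,
    ← le_algebraMap_iff_spectrum_le hA.isSelfAdjoint, le_iff, posSemidef_iff_dotProduct_mulVec,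
    and_iff_right
      (show IsHermitian _ from (IsSelfAdjoint.algebraMap _ (.all r)).sub hA.isSelfAdjoint)]
  simp only [star_trivial, sub_mulVec, dotProduct_sub, sub_nonneg, Algebra.algebraMap_eq_smul_one,
    smul_mulVec, one_mulVec, dotProduct_smul, smul_eq_mul]

theorem IsHermitian.forall_le_eigenvalues_iff :
    (∀ i, r ≤ hA.eigenvalues i) ↔ ∀ x, r * (x ⬝ᵥ x) ≤ x ⬝ᵥ A *ᵥ x := by
  rw [← Set.forall_mem_range (p := (r ≤ ·)), ← hA.spectrum_real_eq_range_eigenvalues,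
    ← algebraMap_le_iff_le_spectrum hA.isSelfAdjoint, le_iff, posSemidef_iff_dotProduct_mulVec,
    and_iff_right
      (show IsHermitian _ from hA.isSelfAdjoint.sub (IsSelfAdjoint.algebraMap _ (.all r)))]
  simp only [star_trivial, sub_mulVec, dotProduct_sub, sub_nonneg, Algebra.algebraMap_eq_smul_one,
    smul_mulVec, one_mulVec, dotProduct_smul, smul_eq_mul]

theorem IsHermitian.iInf_eigenvalues_mul_dotProduct_le (x : n → ℝ) :
    (⨅ i, hA.eigenvalues i) * (x ⬝ᵥ x) ≤ x ⬝ᵥ A *ᵥ x :=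
  hA.forall_le_eigenvalues_iff.mp (ciInf_le (Set.finite_range _).bddBelow) x

end Rayleigh

open scoped ComplexOrder in
theorem PosDef.iInf_eigenvalues_pos {𝕜 : Type*} [RCLike 𝕜] [DecidableEq n] [Nonempty n]
    {A : Matrix n n 𝕜} (hA : A.PosDef) : 0 < ⨅ i, hA.1.eigenvalues i := by
  obtain ⟨i, hi⟩ := exists_eq_ciInf_of_finite (f := hA.1.eigenvalues)
  exact hi ▸ hA.eigenvalues_pos i

theorem re_star_dotProduct_map_ofReal_mulVec (A : Matrix n n ℝ) (y : n → ℂ) :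
    (star y ⬝ᵥ A.map Complex.ofReal *ᵥ y).re =
      (Complex.re ∘ y) ⬝ᵥ A *ᵥ (Complex.re ∘ y) + (Complex.im ∘ y) ⬝ᵥ A *ᵥ (Complex.im ∘ y) := by
  simp [dotProduct, mulVec, Complex.re_sum, Finset.mul_sum, ← Finset.sum_add_distrib]

theorem im_star_dotProduct_map_ofReal_mulVec (A : Matrix n n ℝ) (y : n → ℂ) :
    (star y ⬝ᵥ A.map Complex.ofReal *ᵥ y).im =
      (Complex.re ∘ y) ⬝ᵥ A *ᵥ (Complex.im ∘ y) - (Complex.im ∘ y) ⬝ᵥ A *ᵥ (Complex.re ∘ y) := by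
  simp [dotProduct, mulVec, Complex.im_sum, Finset.mul_sum, sub_eq_add_neg,
    ← Finset.sum_neg_distrib, ← Finset.sum_add_distrib]

theorem dotProduct_re_add_dotProduct_im_pos {y : n → ℂ} (hy : y ≠ 0) :
    0 < (Complex.re ∘ y) ⬝ᵥ (Complex.re ∘ y) + (Complex.im ∘ y) ⬝ᵥ (Complex.im ∘ y) := by
  contrapose! hy
  have hre : Complex.re ∘ y = 0 := dotProduct_self_eq_zero.mp <| by
    linarith [dotProduct_self_nonneg (Complex.re ∘ y), dotProduct_self_nonneg (Complex.im ∘ y)]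
  have him : Complex.im ∘ y = 0 := dotProduct_self_eq_zero.mp <| by
    linarith [dotProduct_self_nonneg (Complex.re ∘ y), dotProduct_self_nonneg (Complex.im ∘ y)]
  funext j
  exact Complex.ext (congrFun hre j) (congrFun him j)

theorem dotProduct_map_re_inv_mulVec [DecidableEq n] {D : Matrix n n ℂ} (hD : IsUnit D.det)
    (x : n → ℝ) :
    x ⬝ᵥ D⁻¹.map Complex.re *ᵥ x =
      (star (D⁻¹ *ᵥ (Complex.ofReal ∘ x)) ⬝ᵥ D *ᵥ (D⁻¹ *ᵥ (Complex.ofReal ∘ x))).re := by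
  rw [mulVec_mulVec, mul_nonsing_inv D hD, one_mulVec, map_re_mulVec, dotProduct_comm]
  simp [dotProduct, Complex.re_sum]

section ReImDecomposition

variable {R I : Matrix n n ℝ} {C : Matrix n n ℂ}
  (hI : I.IsSymm) (hC : C = R.map Complex.ofReal + Complex.I • I.map Complex.ofReal)
include hI hC

theorem re_star_dotProduct_mulVec_eq (y : n → ℂ) :
    (star y ⬝ᵥ C *ᵥ y).re =
      (Complex.re ∘ y) ⬝ᵥ R *ᵥ (Complex.re ∘ y) + (Complex.im ∘ y) ⬝ᵥ R *ᵥ (Complex.im ∘ y) := by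
  rw [hC, add_mulVec, smul_mulVec, dotProduct_add, dotProduct_smul, Complex.add_re, smul_eq_mul,
    Complex.I_mul_re, im_star_dotProduct_map_ofReal_mulVec, hI.dotProduct_mulVec_comm, sub_self,
    neg_zero, add_zero, re_star_dotProduct_map_ofReal_mulVec]

variable {r : ℝ} (hRr : ∀ v, r * (v ⬝ᵥ v) ≤ v ⬝ᵥ R *ᵥ v)
include hRr

theorem mul_dotProduct_le_re_star_dotProduct_mulVec (y : n → ℂ) :
    r * ((Complex.re ∘ y) ⬝ᵥ (Complex.re ∘ y) + (Complex.im ∘ y) ⬝ᵥ (Complex.im ∘ y)) ≤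
      (star y ⬝ᵥ C *ᵥ y).re := by
  rw [re_star_dotProduct_mulVec_eq hI hC, mul_add]
  exact add_le_add (hRr _) (hRr _)

variable [DecidableEq n] (hr : 0 < r)
include hr

theorem isUnit_det_of_re_coercive : IsUnit C.det := by
  rw [isUnit_iff_ne_zero, Ne, ← exists_mulVec_eq_zero_iff]
  rintro ⟨y, hy, hCy⟩
  have h := mul_dotProduct_le_re_star_dotProduct_mulVec hI hC hRr y
  rw [hCy, dotProduct_zero, Complex.zero_re] at h
  exact (mul_pos hr (dotProduct_re_add_dotProduct_im_pos hy)).not_ge h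

theorem dotProduct_map_re_inv_mulVec_le (x : n → ℝ) :
    x ⬝ᵥ C⁻¹.map Complex.re *ᵥ x ≤ r⁻¹ * (x ⬝ᵥ x) := by
  have h := mul_dotProduct_le_re_star_dotProduct_mulVec hI hC hRr (C⁻¹ *ᵥ (Complex.ofReal ∘ x))
  rw [← dotProduct_map_re_inv_mulVec (isUnit_det_of_re_coercive hI hC hRr hr),
    ← map_re_mulVec] at h
  refine dotProduct_le_inv_mul_of_mul_le hr (le_trans ?_ h)
  nlinarith [dotProduct_self_nonneg (Complex.im ∘ (C⁻¹ *ᵥ (Complex.ofReal ∘ x)))]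

theorem posDef_map_re_inv (hM : (C⁻¹.map Complex.re).IsHermitian) :
    (C⁻¹.map Complex.re).PosDef := by
  have hC₀ := isUnit_det_of_re_coercive hI hC hRr hr
  refine .of_dotProduct_mulVec_pos hM fun x hx => ?_
  have hy : C⁻¹ *ᵥ (Complex.ofReal ∘ x) ≠ 0 := fun hy => hx <| by
    have hx' : Complex.ofReal ∘ x = C *ᵥ (C⁻¹ *ᵥ (Complex.ofReal ∘ x)) := by
      rw [mulVec_mulVec, mul_nonsing_inv C hC₀, one_mulVec]
    rw [hy, mulVec_zero] at hx'
    funext j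
    simpa using congrFun hx' j
  rw [star_trivial, dotProduct_map_re_inv_mulVec hC₀]
  exact (mul_pos hr (dotProduct_re_add_dotProduct_im_pos hy)).trans_le
    (mul_dotProduct_le_re_star_dotProduct_mulVec hI hC hRr _)

end ReImDecomposition

end Matrix

/-- For `C = R + iI` with `R` real symmetric positive definite and `I` real symmetric:
`λmax(Re C⁻¹) ≤ λmin(R)⁻¹` and `λmax(R) ≤ λmin(Re C⁻¹)⁻¹`. -/
theorem re_inv_eigenvalue_bounds {n : Type*} [Fintype n] [DecidableEq n] [Nonempty n]
    (R I : Matrix n n ℝ) (hR : R.PosDef) (hI : I.IsHermitian)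
    (C : Matrix n n ℂ)
    (hC : C = R.map (Complex.ofReal) + Complex.I • I.map (Complex.ofReal))
    (hM : (C⁻¹.map Complex.re).IsHermitian) :
    (⨆ i, hM.eigenvalues i) ≤ (⨅ i, hR.1.eigenvalues i)⁻¹ ∧
      (⨆ i, hR.1.eigenvalues i) ≤ (⨅ i, hM.eigenvalues i)⁻¹ := by
  have hI' : I.IsSymm := isHermitian_iff_isSymm.mp hI
  have hR_ge := hR.1.iInf_eigenvalues_mul_dotProduct_le
  have hR_pos := hR.iInf_eigenvalues_pos
  refine ⟨ciSup_le fun i => hM.forall_eigenvalues_le_iff.mpr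
    (dotProduct_map_re_inv_mulVec_le hI' hC hR_ge hR_pos) i, ?_⟩
  have hC' : C.IsSymm := by
    rw [hC]
    exact ((isHermitian_iff_isSymm.mp hR.1).map _).add ((hI'.map _).smul _)
  have hM_pos := posDef_map_re_inv hI' hC hR_ge hR_pos hM
  have hR_eq : (C⁻¹)⁻¹.map Complex.re = R := by
    rw [nonsing_inv_nonsing_inv C (isUnit_det_of_re_coercive hI' hC hR_ge hR_pos), hC]
    ext j k
    simp
  have hR_le := dotProduct_map_re_inv_mulVec_le (hC'.inv.map Complex.im)
    (map_re_add_I_smul_map_im C⁻¹).symm hM.iInf_eigenvalues_mul_dotProduct_le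
    hM_pos.iInf_eigenvalues_pos
  rw [hR_eq] at hR_le
  exact ciSup_le fun i => hR.1.forall_eigenvalues_le_iff.mpr hR_le i
end

section
/- Let $R$ be real symmetric positive definite, $I$ real symmetric ($n \times n$), and let $B$ be a real positive semidefinite symmetric matrix with unit diagonal. Then for every diagonal index $k$, $\big[(B \circ I)(B \circ R)^{-1}(B \circ I)\big]_{kk} \leq \big[I R^{-1} I\big]_{kk}$. -/
/-!
Because `R` is positive definite, the block matrix `[[R, I], [I, I R⁻¹ I]]` is positive
semidefinite (its Schur complement vanishes), and so is `[[B, B], [B, B]]`. By the Schur product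
theorem their Hadamard product `[[B ∘ R, B ∘ I], [B ∘ I, B ∘ (I R⁻¹ I)]]` is positive
semidefinite, so its Schur complement `B ∘ (I R⁻¹ I) - (B ∘ I)(B ∘ R)⁻¹(B ∘ I)` has nonnegative
diagonal; the unit diagonal of `B` makes the first term agree with `I R⁻¹ I` on the diagonal.
The inverse is genuine: `R ≥ c • 1` for some `c > 0`, so `B ∘ R ≥ c • (B ∘ 1) = c • 1`.
-/

open Matrix

namespace Matrix

theorem fromBlocks_hadamard_fromBlocks {α l m n o : Type*} [Mul α]
    (A A' : Matrix n l α) (B B' : Matrix n m α) (C C' : Matrix o l α) (D D' : Matrix o m α) :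
    fromBlocks A B C D ⊙ fromBlocks A' B' C' D' =
      fromBlocks (A ⊙ A') (B ⊙ B') (C ⊙ C') (D ⊙ D') := by
  ext (i | i) (j | j) <;> rfl

theorem PosSemidef.fromBlocks_self {R n : Type*} [CommRing R] [PartialOrder R] [StarRing R]
    [Fintype n] [DecidableEq n] {B : Matrix n n R} (hB : B.PosSemidef) :
    (fromBlocks B B B B).PosSemidef := by
  have h := hB.conjTranspose_mul_mul_same (fromCols (1 : Matrix n n R) (1 : Matrix n n R))
  rwa [conjTranspose_fromCols_eq_fromRows_conjTranspose, fromRows_mul, fromRows_mul_fromCols,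
    conjTranspose_one, one_mul, mul_one] at h

open scoped MatrixOrder ComplexOrder

variable {𝕜 n : Type*} [RCLike 𝕜] [Fintype n] [DecidableEq n]

theorem PosSemidef.hadamard_posDef_of_diag_pos {A B : Matrix n n 𝕜} (hA : A.PosSemidef)
    (hdiag : ∀ i, 0 < A i i) (hB : B.PosDef) : (A ⊙ B).PosDef := by
  cases isEmpty_or_nonempty n
  · exact ⟨hA.1.hadamard hB.1, fun x hx => (hx (Subsingleton.elim _ _)).elim⟩
  obtain ⟨c, hc, hcB⟩ : ∃ c > 0, algebraMap ℝ (Matrix n n 𝕜) c ≤ B :=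
    (CFC.exists_pos_algebraMap_le_iff hB.1.isSelfAdjoint).mpr fun _ hx =>
      hB.isStrictlyPositive.spectrum_pos hx
  rw [Algebra.algebraMap_eq_smul_one, le_iff] at hcB
  have hsplit : A ⊙ B = A ⊙ (B - c • 1) + c • diagonal A.diag := by
    rw [← hadamard_one, ← hadamard_smul, ← hadamard_add, sub_add_cancel]
  rw [hsplit]
  exact PosDef.posSemidef_add (hA.hadamard hcB) ((PosDef.diagonal hdiag).smul hc)

theorem PosSemidef.hadamard_conjTranspose_mul_inv_mul_le {A B : Matrix n n 𝕜} (hA : A.PosDef)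
    (hB : B.PosSemidef) (hBA : (B ⊙ A).PosDef) (X : Matrix n n 𝕜) :
    (B ⊙ X)ᴴ * (B ⊙ A)⁻¹ * (B ⊙ X) ≤ B ⊙ (Xᴴ * A⁻¹ * X) := by
  have := hA.isUnit.invertible
  have := hBA.isUnit.invertible
  have hblock : (fromBlocks A X Xᴴ (Xᴴ * A⁻¹ * X)).PosSemidef := by
    rw [PosDef.fromBlocks₁₁ _ _ hA, sub_self]
    exact .zero
  have hconj : B ⊙ Xᴴ = (B ⊙ X)ᴴ := by
    rw [conjTranspose_hadamard, hB.1.eq, hadamard_comm]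
  have hprod := hB.fromBlocks_self.hadamard hblock
  rw [fromBlocks_hadamard_fromBlocks, hconj, PosDef.fromBlocks₁₁ _ _ hBA] at hprod
  exact le_iff.mpr hprod

end Matrix

/-- Diagonal entries of `(B∘I)(B∘R)⁻¹(B∘I)` are dominated by those of `I R⁻¹ I`,
for `R` real positive definite, `I` real symmetric, and `B` positive semidefinite with
unit diagonal. -/
theorem hadamard_schur_diagonal_bound {n : Type*} [Fintype n] [DecidableEq n]
    (R I B : Matrix n n ℝ) (hR : R.PosDef) (hI : I.IsHermitian)
    (hB : B.PosSemidef) (hBdiag : ∀ i, B i i = 1) :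
    ∀ k, (Matrix.hadamard B I * (Matrix.hadamard B R)⁻¹ * Matrix.hadamard B I) k k ≤
      (I * R⁻¹ * I) k k := by
  intro k
  have hBR : (B ⊙ R).PosDef := hB.hadamard_posDef_of_diag_pos (by simp [hBdiag]) hR
  have hle := hB.hadamard_conjTranspose_mul_inv_mul_le hR hBR I
  have hdiag := (le_iff.mp hle).diag_nonneg (i := k)
  rwa [(hB.1.hadamard hI).eq, hI.eq, Matrix.sub_apply, hadamard_apply, hBdiag, one_mul,
    sub_nonneg] at hdiag
end

section
/- (Oppenheim's inequality) Let $A$ and $B$ be real symmetric positive semidefinite $n \times n$ matrices. Then $\det(A \circ B) \geq \det(A) \prod_{i=1}^{n} B_{ii}$, where $A \circ B$ is the Hadamard product. -/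
/-!
Induction on the size, pivoting on one diagonal entry. If the pivots `a` of `A` and `b` of `B`
are positive, then `det A = a · det (A / a)` and `det (A ∘ B) = a b · det ((A ∘ B) / a b)` for the
Schur complements, and with `u` the rest of the pivot column of `A`,
  `(A ∘ B) / a b = (A / a) ∘ B₁₁ + (u uᴴ / a) ∘ (B / b)`.
Both summands are positive semidefinite by the Schur product theorem and `det` is monotone on
positive semidefinite matrices, so `det ((A ∘ B) / a b) ≥ det ((A / a) ∘ B₁₁) ≥ det (A / a) ∏ Bᵢᵢ`
by induction. If a pivot vanishes, the left-hand side is `0`: a positive semidefinite matrix with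
a zero diagonal entry is singular.
-/

open Matrix

namespace Matrix

section SchurComplement

variable {m n α : Type*}

theorem IsHermitian.toBlocks₂₁ [Star α] {M : Matrix (m ⊕ n) (m ⊕ n) α} (hM : M.IsHermitian) :
    M.toBlocks₂₁ = M.toBlocks₁₂ᴴ := by
  ext i j
  exact (hM.apply (Sum.inr i) (Sum.inl j)).symm

variable [Fintype n] [DecidableEq n]

noncomputable def schurComplement [CommRing α] (M : Matrix (m ⊕ n) (m ⊕ n) α) : Matrix m m α :=
  M.toBlocks₁₁ - M.toBlocks₁₂ * M.toBlocks₂₂⁻¹ * M.toBlocks₂₁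

theorem det_eq_det_toBlocks₂₂_mul_det_schurComplement [CommRing α] [Fintype m] [DecidableEq m]
    (M : Matrix (m ⊕ n) (m ⊕ n) α) (h : IsUnit M.toBlocks₂₂.det) :
    M.det = M.toBlocks₂₂.det * M.schurComplement.det := by
  let := invertibleOfIsUnitDet _ h
  conv_lhs => rw [← fromBlocks_toBlocks M]
  rw [det_fromBlocks₂₂, invOf_eq_nonsing_inv]
  rfl

theorem det_eq_mul_det_schurComplement [Field α] [Fintype m] [DecidableEq m] [Unique n]
    {M : Matrix (m ⊕ n) (m ⊕ n) α} (h : M (.inr default) (.inr default) ≠ 0) :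
    M.det = M (.inr default) (.inr default) * M.schurComplement.det := by
  rw [det_eq_det_toBlocks₂₂_mul_det_schurComplement M (by simpa [det_unique]), det_unique]
  rfl

theorem schurComplement_hadamard [Field α] [Unique n] (A B : Matrix (m ⊕ n) (m ⊕ n) α) :
    (A ⊙ B).schurComplement = A.schurComplement ⊙ B.toBlocks₁₁ +
      (A.toBlocks₁₂ * A.toBlocks₂₂⁻¹ * A.toBlocks₂₁) ⊙ B.schurComplement := by
  ext i j
  simp only [schurComplement, hadamard_apply, add_apply, sub_apply, mul_apply, inv_subsingleton,
    Fintype.sum_unique, diagonal_apply_eq, toBlocks₁₁, toBlocks₁₂, toBlocks₂₁, toBlocks₂₂, of_apply,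
    Ring.inverse_eq_inv', mul_inv]
  ring

variable {𝕜 : Type*} [RCLike 𝕜] {M : Matrix (m ⊕ n) (m ⊕ n) 𝕜}

open scoped ComplexOrder

theorem PosSemidef.schurComplement [Finite m] (hM : M.PosSemidef) (hD : M.toBlocks₂₂.PosDef) :
    M.schurComplement.PosSemidef := by
  let := invertibleOfIsUnitDet _ ((isUnit_iff_isUnit_det _).mp hD.isUnit)
  have h₂₁ := hM.isHermitian.toBlocks₂₁
  rw [← fromBlocks_toBlocks M, h₂₁, PosDef.fromBlocks₂₂ _ _ hD] at hM
  rwa [Matrix.schurComplement, h₂₁]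

theorem PosSemidef.toBlocks₁₂_mul_inv_mul_toBlocks₂₁ [Finite m] (hM : M.PosSemidef)
    (hD : M.toBlocks₂₂.PosDef) :
    (M.toBlocks₁₂ * M.toBlocks₂₂⁻¹ * M.toBlocks₂₁).PosSemidef := by
  rw [hM.isHermitian.toBlocks₂₁]
  exact hD.inv.posSemidef.mul_mul_conjTranspose_same _

end SchurComplement

section Determinant

variable {n : Type*} [Fintype n] [DecidableEq n]

open scoped ComplexOrder in
theorem PosSemidef.det_eq_zero_of_diag_eq_zero {𝕜 : Type*} [RCLike 𝕜] {A : Matrix n n 𝕜}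
    (hA : A.PosSemidef) {i : n} (hi : A i i = 0) : A.det = 0 := by
  refine exists_mulVec_eq_zero_iff.mp ⟨Pi.single i 1, by simp, ?_⟩
  exact (hA.dotProduct_mulVec_zero_iff _).mp (by simpa using hi)

theorem PosSemidef.one_le_det_one_add {M : Matrix n n ℝ} (hM : M.PosSemidef) :
    1 ≤ (1 + M).det := by
  set u := hM.isHermitian.eigenvectorUnitary
  have hconj :
      1 + M = Unitary.conjStarAlgAut ℝ _ u (diagonal (1 + hM.isHermitian.eigenvalues)) := by
    conv_lhs => rw [hM.isHermitian.spectral_theorem, ← map_one (Unitary.conjStarAlgAut ℝ _ u),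
      ← map_add]
    rw [← diagonal_one, diagonal_add]
    rfl
  rw [hconj, Unitary.conjStarAlgAut_apply, det_mul, det_mul, mul_right_comm, ← det_mul,
    Unitary.mul_star_self_of_mem u.2, det_one, one_mul, det_diagonal]
  exact Finset.one_le_prod fun i _ => le_add_of_nonneg_right (hM.eigenvalues_nonneg i)

open scoped MatrixOrder in
theorem PosSemidef.det_le_det_add {A B : Matrix n n ℝ} (hA : A.PosSemidef) (hB : B.PosSemidef) :
    A.det ≤ (A + B).det := by
  obtain ⟨C, hAC⟩ := CStarAlgebra.nonneg_iff_eq_star_mul_self.mp hA.nonneg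
  rw [star_eq_conjTranspose] at hAC
  by_cases hC : IsUnit C
  · have hM : (C⁻¹ᴴ * B * C⁻¹).PosSemidef := hB.conjTranspose_mul_mul_same C⁻¹
    have hsplit : A + B = Cᴴ * (1 + C⁻¹ᴴ * B * C⁻¹) * C := by
      have hCC : C⁻¹ * C = 1 := nonsing_inv_mul C ((isUnit_iff_isUnit_det C).mp hC)
      simp only [Matrix.mul_add, Matrix.add_mul, Matrix.mul_one, hAC, Matrix.mul_assoc, hCC,
        ← Matrix.mul_assoc Cᴴ, ← conjTranspose_mul, conjTranspose_one, Matrix.one_mul]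
    calc A.det = A.det * 1 := (mul_one _).symm
      _ ≤ A.det * (1 + C⁻¹ᴴ * B * C⁻¹).det :=
        mul_le_mul_of_nonneg_left hM.one_le_det_one_add hA.det_nonneg
      _ = (A + B).det := by rw [hsplit, hAC, det_mul, det_mul, det_mul]; ring
  · have hC0 : C.det = 0 := by simpa [isUnit_iff_isUnit_det] using hC
    have hA0 : A.det = 0 := by rw [hAC, det_mul, hC0, mul_zero]
    exact hA0 ▸ (hA.add hB).det_nonneg

end Determinant

end Matrix

def OppenheimHolds (n : Type*) [Fintype n] [DecidableEq n] : Prop :=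
  ∀ A B : Matrix n n ℝ, A.PosSemidef → B.PosSemidef → A.det * ∏ i, B i i ≤ (A ⊙ B).det

namespace OppenheimHolds

theorem of_equiv {m n : Type*} [Fintype m] [DecidableEq m] [Fintype n] [DecidableEq n]
    (e : m ≃ n) (h : OppenheimHolds m) : OppenheimHolds n := by
  intro A B hA hB
  have := h (A.submatrix e e) (B.submatrix e e) (hA.submatrix e) (hB.submatrix e)
  simp only [← submatrix_hadamard, det_submatrix_equiv_self, submatrix_apply] at this
  rwa [Equiv.prod_comp e fun i => B i i] at this

theorem of_isEmpty {n : Type*} [Fintype n] [DecidableEq n] [IsEmpty n] : OppenheimHolds n := by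
  intro A B _ _
  simp

theorem sum_unique {m n : Type*} [Fintype m] [DecidableEq m] [Fintype n] [DecidableEq n]
    [Unique n] (ih : OppenheimHolds m) : OppenheimHolds (m ⊕ n) := by
  intro A B hA hB
  obtain ha | ha := (hA.diag_nonneg (i := .inr default)).eq_or_lt
  · rw [hA.det_eq_zero_of_diag_eq_zero ha.symm, zero_mul]
    exact (hA.hadamard hB).det_nonneg
  obtain hb | hb := (hB.diag_nonneg (i := .inr default)).eq_or_lt
  · rw [Finset.prod_eq_zero (f := fun i => B i i) (Finset.mem_univ _) hb.symm, mul_zero]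
    exact (hA.hadamard hB).det_nonneg
  have hA₂₂ : A.toBlocks₂₂.PosDef :=
    (hA.submatrix Sum.inr).posDef_iff_det_ne_zero.mpr (by rw [det_unique]; exact ha.ne')
  have hB₂₂ : B.toBlocks₂₂.PosDef :=
    (hB.submatrix Sum.inr).posDef_iff_det_ne_zero.mpr (by rw [det_unique]; exact hb.ne')
  have hSA := hA.schurComplement hA₂₂
  have hB₁₁ : B.toBlocks₁₁.PosSemidef := hB.submatrix Sum.inl
  set c := A (.inr default) (.inr default) * B (.inr default) (.inr default)
  calc A.det * ∏ i, B i i = c * (A.schurComplement.det * ∏ i, B.toBlocks₁₁ i i) := by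
        rw [det_eq_mul_det_schurComplement ha.ne', Fintype.prod_sum_type,
          Fintype.prod_unique fun u : n => B (.inr u) (.inr u)]
        simp only [c, toBlocks₁₁, of_apply]
        ring
    _ ≤ c * (A.schurComplement ⊙ B.toBlocks₁₁).det := by
        gcongr
        exact ih _ _ hSA hB₁₁
    _ ≤ c * (A ⊙ B).schurComplement.det := by
        gcongr
        rw [schurComplement_hadamard]
        exact (hSA.hadamard hB₁₁).det_le_det_add
          ((hA.toBlocks₁₂_mul_inv_mul_toBlocks₂₁ hA₂₂).hadamard (hB.schurComplement hB₂₂))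
    _ = (A ⊙ B).det := (det_eq_mul_det_schurComplement (M := A ⊙ B) (mul_pos ha hb).ne').symm

end OppenheimHolds

/-- Oppenheim's inequality: `det(A ∘ B) ≥ det A * ∏ i, B i i` for real positive
semidefinite symmetric matrices `A` and `B`. -/
theorem oppenheim_inequality {n : Type*} [Fintype n] [DecidableEq n]
    (A B : Matrix n n ℝ) (hA : A.PosSemidef) (hB : B.PosSemidef) :
    A.det * ∏ i, B i i ≤ (Matrix.hadamard A B).det := by
  refine Fintype.induction_empty_option (P := fun α _ => ∀ [DecidableEq α], OppenheimHolds α)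
    ?_ OppenheimHolds.of_isEmpty ?_ n A B hA hB
  · intro α β _ e h _
    let := Fintype.ofEquiv β e.symm
    classical exact h.of_equiv e
  · intro α _ ih _
    classical exact ih.sum_unique.of_equiv (Equiv.optionEquivSumPUnit.{0} α).symm
end

section
/- For every natural number $d$, every real $\mu$ with $0 < \mu \leq 1$, and every real $t \geq 0$: $e^{-\mu t^2 / 16} \, \frac{(1 + 2\mu t)^d}{d!} \leq \frac{6^d}{\sqrt{d!}}$. -/
lemma pow_self_le_factorial_mul_exp (d : ℕ) (hd : 1 ≤ d) :
    (d : ℝ) ^ d ≤ (d.factorial : ℝ) * Real.exp (d - 1) := by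
  induction d with
  | zero => omega
  | succ n ih =>
    rcases Nat.eq_zero_or_pos n with h0 | hn
    · subst h0; simp
    · have ihn := ih hn
      have hn1 : (1 : ℝ) ≤ n := by exact_mod_cast hn
      have hnpos : (0 : ℝ) < n := by linarith
      -- (n+1) ≤ n * exp (1/n)
      have h1 : ((n : ℝ) + 1) ≤ n * Real.exp (1 / n) := by
        have := Real.add_one_le_exp (1 / (n : ℝ))
        have h2 : (n : ℝ) * (1 / n + 1) ≤ n * Real.exp (1 / n) :=
          mul_le_mul_of_nonneg_left this (le_of_lt hnpos)
        have h3 : (n : ℝ) * (1 / n + 1) = n + 1 := by field_simp; ring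
        linarith [h3 ▸ h2]
      -- (n+1)^n ≤ n^n * exp 1
      have h4 : ((n : ℝ) + 1) ^ n ≤ ((n : ℝ)) ^ n * Real.exp 1 := by
        calc ((n : ℝ) + 1) ^ n ≤ ((n : ℝ) * Real.exp (1 / n)) ^ n := by
              apply pow_le_pow_left₀ (by positivity) h1
          _ = (n : ℝ) ^ n * Real.exp (1 / n) ^ n := by rw [mul_pow]
          _ = (n : ℝ) ^ n * Real.exp 1 := by
              rw [← Real.exp_nat_mul]
              congr 1
              field_simp
      have h5 : ((n : ℝ) + 1) ^ (n + 1) = ((n : ℝ) + 1) * ((n : ℝ) + 1) ^ n := by ring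
      have hexp : Real.exp ((n : ℝ) - 1) * Real.exp 1 = Real.exp ((n : ℝ) + 1 - 1) := by
        rw [← Real.exp_add]; ring_nf
      have hfac : ((n + 1).factorial : ℝ) = ((n : ℝ) + 1) * (n.factorial : ℝ) := by
        push_cast [Nat.factorial_succ]; ring
      have hnn : (0 : ℝ) ≤ (n : ℝ) + 1 := by positivity
      calc ((n + 1 : ℕ) : ℝ) ^ (n + 1) = ((n : ℝ) + 1) * ((n : ℝ) + 1) ^ n := by
            push_cast; ring
        _ ≤ ((n : ℝ) + 1) * ((n : ℝ) ^ n * Real.exp 1) :=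
            mul_le_mul_of_nonneg_left h4 hnn
        _ ≤ ((n : ℝ) + 1) * ((n.factorial : ℝ) * Real.exp ((n : ℝ) - 1) * Real.exp 1) := by
            apply mul_le_mul_of_nonneg_left _ hnn
            exact mul_le_mul_of_nonneg_right ihn (Real.exp_pos 1).le
        _ = ((n + 1).factorial : ℝ) * Real.exp (((n : ℕ) + 1 : ℝ) - 1) := by
            rw [hfac]
            have : Real.exp ((n : ℝ) - 1) * Real.exp 1 = Real.exp (((n : ℕ) + 1 : ℝ) - 1) := by
              rw [← Real.exp_add]; ring_nf
            rw [mul_assoc, mul_assoc, this]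
        _ = ((n + 1).factorial : ℝ) * Real.exp (((n + 1 : ℕ) : ℝ) - 1) := by push_cast; ring_nf

/-- tangent line bound: `x ≤ x₀ * exp (x/x₀ - 1)` for `x₀ > 0`. -/
lemma le_mul_exp_div_sub_one {x x0 : ℝ} (hx0 : 0 < x0) : x ≤ x0 * Real.exp (x / x0 - 1) := by
  have h := Real.add_one_le_exp (x / x0 - 1)
  have : x / x0 ≤ Real.exp (x / x0 - 1) := by linarith
  calc x = x0 * (x / x0) := by field_simp
    _ ≤ x0 * Real.exp (x / x0 - 1) := mul_le_mul_of_nonneg_left this hx0.le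

/-- Single-site large field regulator estimate:
`e^{-μ t²/16} (1 + 2 μ t)^d / d! ≤ 6^d / √(d!)` for `0 < μ ≤ 1` and `t ≥ 0`. -/
theorem large_field_regulator_bound (d : ℕ) (μ t : ℝ) (hμ0 : 0 < μ) (hμ1 : μ ≤ 1)
    (ht : 0 ≤ t) :
    Real.exp (-(μ * t ^ 2) / 16) * (1 + 2 * μ * t) ^ d / (d.factorial : ℝ) ≤
      6 ^ d / Real.sqrt (d.factorial : ℝ) := by
  rcases Nat.eq_zero_or_pos d with h0 | hd
  · subst h0
    simp only [pow_zero, mul_one, Nat.factorial_zero, Nat.cast_one, Real.sqrt_one, div_one]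
    have : -(μ * t ^ 2) / 16 ≤ 0 := by nlinarith
    calc Real.exp (-(μ * t ^ 2) / 16) ≤ Real.exp 0 := Real.exp_le_exp.mpr this
      _ = 1 := Real.exp_zero
  · set s : ℝ := μ * t with hs_def
    have hs : 0 ≤ s := by positivity
    have hdpos : (0 : ℝ) < d := by exact_mod_cast hd
    have hfacpos : (0 : ℝ) < (d.factorial : ℝ) := by exact_mod_cast d.factorial_pos
    -- step 1: reduce exponent
    have hexp1 : Real.exp (-(μ * t ^ 2) / 16) ≤ Real.exp (-(s ^ 2) / 16) := by
      apply Real.exp_le_exp.mpr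
      have : s ^ 2 ≤ μ * t ^ 2 := by nlinarith
      linarith
    set X : ℝ := Real.exp (-(s ^ 2) / 16) * (1 + 2 * s) ^ d with hX_def
    have hXnn : 0 ≤ X := by positivity
    -- key squared bound
    have key : X ^ 2 ≤ 36 ^ d * (d.factorial : ℝ) := by
      have hXsq : X ^ 2 = Real.exp (-(s ^ 2) / 8) * ((1 + 2 * s) ^ 2) ^ d := by
        have he : Real.exp (-(s ^ 2) / 16) * Real.exp (-(s ^ 2) / 16)
            = Real.exp (-(s ^ 2) / 8) := by rw [← Real.exp_add]; ring_nf
        rw [hX_def]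
        calc (Real.exp (-(s ^ 2) / 16) * (1 + 2 * s) ^ d) ^ 2
            = Real.exp (-(s ^ 2) / 16) ^ 2 * ((1 + 2 * s) ^ 2) ^ d := by
              rw [mul_pow, ← pow_mul, mul_comm d 2, pow_mul]
          _ = Real.exp (-(s ^ 2) / 8) * ((1 + 2 * s) ^ 2) ^ d := by rw [sq, he]
      have h1 : (1 + 2 * s) ^ 2 ≤ 9 + (9 / 2) * s ^ 2 := by nlinarith [sq_nonneg (s - 4)]
      have h1nn : (0 : ℝ) ≤ (1 + 2 * s) ^ 2 := sq_nonneg _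
      have h2 : ((1 + 2 * s) ^ 2) ^ d ≤ (9 + (9 / 2) * s ^ 2) ^ d :=
        pow_le_pow_left₀ h1nn h1 d
      -- tangent bound
      have h3 : (9 + (9 / 2) * s ^ 2) ≤ 36 * d * Real.exp ((9 + (9 / 2) * s ^ 2) / (36 * d) - 1) :=
        le_mul_exp_div_sub_one (by positivity)
      have h4 : (9 + (9 / 2) * s ^ 2) ^ d ≤
          (36 * (d : ℝ)) ^ d * Real.exp (1 / 4 + s ^ 2 / 8 - d) := by
        calc (9 + (9 / 2) * s ^ 2) ^ d
            ≤ (36 * (d : ℝ) * Real.exp ((9 + (9 / 2) * s ^ 2) / (36 * d) - 1)) ^ d :=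
              pow_le_pow_left₀ (by positivity) h3 d
          _ = (36 * (d : ℝ)) ^ d * Real.exp ((9 + (9 / 2) * s ^ 2) / (36 * d) - 1) ^ d := by
              rw [mul_pow]
          _ = (36 * (d : ℝ)) ^ d * Real.exp ((d : ℝ) * ((9 + (9 / 2) * s ^ 2) / (36 * d) - 1)) := by
              rw [← Real.exp_nat_mul]
          _ = (36 * (d : ℝ)) ^ d * Real.exp (1 / 4 + s ^ 2 / 8 - d) := by
              congr 1
              congr 1
              field_simp
              ring
      have h5 : (36 * (d : ℝ)) ^ d * Real.exp (1 / 4 + s ^ 2 / 8 - d) * Real.exp (-(s ^ 2) / 8)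
          = 36 ^ d * (d : ℝ) ^ d * Real.exp (1 / 4 - d) := by
        rw [mul_pow, mul_assoc, ← Real.exp_add]
        ring_nf
      have h6 : (d : ℝ) ^ d ≤ (d.factorial : ℝ) * Real.exp ((d : ℝ) - 1) :=
        pow_self_le_factorial_mul_exp d hd
      calc X ^ 2 = ((1 + 2 * s) ^ 2) ^ d * Real.exp (-(s ^ 2) / 8) := by rw [hXsq]; ring
        _ ≤ (9 + (9 / 2) * s ^ 2) ^ d * Real.exp (-(s ^ 2) / 8) :=
            mul_le_mul_of_nonneg_right h2 (Real.exp_pos _).le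
        _ ≤ (36 * (d : ℝ)) ^ d * Real.exp (1 / 4 + s ^ 2 / 8 - d) * Real.exp (-(s ^ 2) / 8) :=
            mul_le_mul_of_nonneg_right h4 (Real.exp_pos _).le
        _ = 36 ^ d * (d : ℝ) ^ d * Real.exp (1 / 4 - d) := h5
        _ ≤ 36 ^ d * ((d.factorial : ℝ) * Real.exp ((d : ℝ) - 1)) * Real.exp (1 / 4 - d) := by
            apply mul_le_mul_of_nonneg_right _ (Real.exp_pos _).le
            exact mul_le_mul_of_nonneg_left h6 (by positivity)
        _ = 36 ^ d * (d.factorial : ℝ) * Real.exp (-(3 / 4)) := by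
            rw [mul_assoc, mul_assoc, ← Real.exp_add]
            ring_nf
        _ ≤ 36 ^ d * (d.factorial : ℝ) * 1 := by
            apply mul_le_mul_of_nonneg_left _ (by positivity)
            rw [← Real.exp_zero]
            exact Real.exp_le_exp.mpr (by norm_num)
        _ = 36 ^ d * (d.factorial : ℝ) := by ring
    -- take square roots
    have hX_le : X ≤ 6 ^ d * Real.sqrt (d.factorial : ℝ) := by
      have h36 : ((6 : ℝ) ^ d * Real.sqrt (d.factorial : ℝ)) ^ 2
          = 36 ^ d * (d.factorial : ℝ) := by
        rw [mul_pow, Real.sq_sqrt hfacpos.le, ← pow_mul, mul_comm d 2, pow_mul]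
        norm_num
      have hR : 0 ≤ (6 : ℝ) ^ d * Real.sqrt (d.factorial : ℝ) := by positivity
      have h := Real.sqrt_le_sqrt (key.trans_eq h36.symm)
      rwa [Real.sqrt_sq hXnn, Real.sqrt_sq hR] at h
    -- conclude
    have hsqrt : Real.sqrt (d.factorial : ℝ) * Real.sqrt (d.factorial : ℝ) = (d.factorial : ℝ) :=
      Real.mul_self_sqrt hfacpos.le
    have hsqpos : 0 < Real.sqrt (d.factorial : ℝ) := Real.sqrt_pos.mpr hfacpos
    have step : Real.exp (-(μ * t ^ 2) / 16) * (1 + 2 * μ * t) ^ d ≤ X := by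
      rw [hX_def]
      have : (1 + 2 * μ * t) ^ d = (1 + 2 * s) ^ d := by rw [hs_def]; ring_nf
      rw [this]
      exact mul_le_mul_of_nonneg_right hexp1 (by positivity)
    rw [div_le_div_iff₀ hfacpos hsqpos]
    calc Real.exp (-(μ * t ^ 2) / 16) * (1 + 2 * μ * t) ^ d * Real.sqrt (d.factorial : ℝ)
        ≤ X * Real.sqrt (d.factorial : ℝ) := mul_le_mul_of_nonneg_right step hsqpos.le
      _ ≤ 6 ^ d * Real.sqrt (d.factorial : ℝ) * Real.sqrt (d.factorial : ℝ) :=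
          mul_le_mul_of_nonneg_right hX_le hsqpos.le
      _ = 6 ^ d * (d.factorial : ℝ) := by rw [mul_assoc, hsqrt]
end

section
/- Let $(\mathbb{L}, d)$ be a finite metric space, let $m, m_V, \tilde{m} > 0$, and define $c_{\mathsf{g}}(\mu) = \sup_{x} \sum_{y} e^{-\mu d(x,y)}$. Then $\sup_{x \in \mathbb{L}} \sum_{\substack{X \subseteq \mathbb{L}, X \neq \emptyset \\ F \subseteq T \in \mathfrak{T}(X)}} 12^{-|X|} \, c_{\mathsf{g}}(m_V)^{-|F|} c_{\mathsf{g}}(m)^{-|T \setminus F|} \, e^{-m_V d(F) - m \, d(T \setminus F)} \, e^{-\tilde{m}\, d(x, X)} \leq c_{\mathsf{g}}(\tilde{m})$, where the sum is over nonempty subsets $X$, trees $T$ on $X$, and subforests $F \subseteq T$, with $d(F) = \sum_{\{y,y'\} \in F} d(y,y')$ and $d(x, X) = \min_{y \in X} d(x,y)$. -/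
open scoped Classical

/-- The geometric constant `c_g(μ) = sup_x ∑_y e^{-μ d(x,y)}` of a finite metric space. -/
noncomputable def geomConst (L : Type*) [MetricSpace L] [Fintype L] (μ : ℝ) : ℝ :=
  ⨆ x : L, ∑ y : L, Real.exp (-μ * dist x y)

/-- Total edge length of a finite set of unordered pairs of points of a subset. -/
noncomputable def edgeLength {L : Type*} [MetricSpace L] {X : Finset L}
    (F : Finset (Sym2 {y // y ∈ X})) : ℝ :=
  ∑ e ∈ F, Sym2.lift ⟨fun (a b : {y // y ∈ X}) => dist (a : L) (b : L),
    fun _ _ => dist_comm _ _⟩ e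

/-!
Summing over the subforests `F ⊆ T` factorises the weight of a tree into a product over its
edges of `w(e) = c_g(m_V)⁻¹ e^{-m_V d(e)} + c_g(m)⁻¹ e^{-m d(e)}`, and `∑_a w({a, b}) ≤ 2` for
every `b`. Bound `e^{-m̃ d(x,X)}` by `∑_{v ∈ X} e^{-m̃ d(x,v)}` and fix `|X| = n + 1`. Each of the
`n!` labellings `σ : Fin (n+1) ≃ X` with the chosen `v` at `0` turns the tree into a parent map
`p` on `Fin (n+1)` rooted at `0`; the labelled configuration `(σ, p)` determines `X`, `T` and `v`.
For a fixed `p`, summing the labels of the leaves away one at a time gives at most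
`c_g(m̃) 2^n`, and there are at most `(n+1)^n` parent maps. The resulting bound
`12^{-(n+1)} (n+1)^n / n! 2^n c_g(m̃) ≤ 12^{-(n+1)} e^{n+1} 2^n c_g(m̃)` sums over `n` to at most
`c_g(m̃)`.
-/

open Finset
open scoped Nat

theorem Finset.sum_comp_le_sum_of_injOn {ι κ M : Type*} [AddCommMonoid M] [Preorder M]
    [AddLeftMono M] {s : Finset ι} {t : Finset κ} {e : ι → κ} (he : Set.MapsTo e s t)
    (hinj : Set.InjOn e s) {f : κ → M} (hf : ∀ k ∈ t, 0 ≤ f k) :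
    ∑ i ∈ s, f (e i) ≤ ∑ k ∈ t, f k := by
  classical
  rw [← sum_image hinj]
  exact sum_le_sum_of_subset_of_nonneg (image_subset_iff.2 he) fun k hk _ => hf k hk

theorem sum_sum_update_eq_card_nsmul {ι L M : Type*} [DecidableEq ι] [Fintype ι] [Fintype L]
    [AddCommMonoid M] (j : ι) (F : (ι → L) → M) :
    ∑ y : ι → L, ∑ u : L, F (Function.update y j u) = Fintype.card L • ∑ y, F y := by
  let e : (ι → L) × L ≃ (ι → L) × L :=
    { toFun z := (Function.update z.1 j z.2, z.1 j)
      invFun z := (Function.update z.1 j z.2, z.1 j)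
      left_inv := by rintro ⟨y, u⟩; simp
      right_inv := by rintro ⟨y, u⟩; simp }
  rw [← Fintype.sum_prod_type']
  calc ∑ z : (ι → L) × L, F (e z).1 = ∑ z : (ι → L) × L, F z.1 := e.sum_comp (fun z => F z.1)
    _ = Fintype.card L • ∑ y, F y := by rw [Fintype.sum_prod_type, sum_comm]; simp

theorem sum_equiv_apply_zero {α M : Type*} [Fintype α] [DecidableEq α] [AddCommMonoid M] {n : ℕ}
    (h : Fintype.card α = n + 1) (f : α → M) :
    ∑ σ : Fin (n + 1) ≃ α, f (σ 0) = n ! • ∑ a, f a := by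
  let e₀ : Fin (n + 1) ≃ α := (Fintype.equivFinOfCardEq h).symm
  calc ∑ σ : Fin (n + 1) ≃ α, f (σ 0)
      = ∑ π : Equiv.Perm (Fin (n + 1)), f (e₀ (π 0)) :=
        (Equiv.sum_comp ((Equiv.refl _).equivCongr e₀) _).symm
    _ = ∑ z : Fin (n + 1) × Equiv.Perm (Fin n), f (e₀ z.1) := by
        rw [← Equiv.sum_comp Equiv.Perm.decomposeFin.symm]
        exact Fintype.sum_congr _ _ fun ⟨p, π⟩ => by
          rw [Equiv.Perm.decomposeFin_symm_apply_zero]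
    _ = n ! • ∑ a, f a := by
        rw [Fintype.sum_prod_type, ← Equiv.sum_comp e₀ f]
        simp [Fintype.card_perm, sum_nsmul]

theorem sum_sum_equiv_le_sum {ι L : Type*} [Fintype ι] [DecidableEq ι] [Fintype L]
    [DecidableEq L] (S : Finset (Finset L)) {G : (ι → L) → ℝ} (hG : ∀ y, 0 ≤ G y) :
    ∑ X ∈ S, ∑ σ : ι ≃ X, G (fun i => σ i) ≤ ∑ y, G y := by
  calc ∑ X ∈ S, ∑ σ : ι ≃ X, G (fun i => σ i)
      ≤ ∑ X ∈ S, ∑ y with univ.image y = X, G y := by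
        refine sum_le_sum fun X _ => sum_comp_le_sum_of_injOn (fun σ _ => ?_)
          (fun σ _ σ' _ h => Equiv.ext fun i => Subtype.ext (congrFun h i)) fun y _ => hG y
        refine mem_filter.2 ⟨mem_univ _, ext fun a => ⟨fun ha => ?_, fun ha => ?_⟩⟩
        · obtain ⟨i, -, rfl⟩ := mem_image.1 ha
          exact (σ i).2
        · exact mem_image.2 ⟨σ.symm ⟨a, ha⟩, mem_univ _, by simp⟩
    _ = ∑ y with univ.image y ∈ S, G y := sum_fiberwise_eq_sum_filter _ _ _ _
    _ ≤ ∑ y, G y := sum_le_sum_of_subset_of_nonneg (filter_subset _ _) fun y _ _ => hG y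

theorem sum_filter_nonempty_powerset {α M : Type*} [AddCommMonoid M] (s : Finset α)
    (f : Finset α → M) :
    ∑ X ∈ s.powerset.filter Finset.Nonempty, f X
      = ∑ n ∈ range #s, ∑ X ∈ powersetCard (n + 1) s, f X := by
  rw [sum_filter, sum_powerset, sum_range_succ']
  simp only [powersetCard_zero, sum_singleton, Finset.not_nonempty_empty, if_false, add_zero]
  refine sum_congr rfl fun n _ => sum_congr rfl fun X hX => if_pos ?_
  exact card_pos.1 ((mem_powersetCard.1 hX).2 ▸ n.succ_pos)

-- The rank condition forces every orbit of `p` to reach `o`: `p` is the parent map of a tree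
-- rooted at `o`.
def IsParentMap {ι : Type*} (o : ι) (p : ι → ι) : Prop :=
  p o = o ∧ ∃ rank : ι → ℕ, ∀ i, i ≠ o → rank (p i) < rank i

theorem IsParentMap.conj {ι κ : Type*} {o : ι} {p : κ → κ} (σ : ι ≃ κ)
    (hp : IsParentMap (σ o) p) : IsParentMap o (σ.symm ∘ p ∘ σ) := by
  obtain ⟨hpo, rank, hrank⟩ := hp
  refine ⟨by simp [hpo], rank ∘ σ, fun i hi => ?_⟩
  simpa using hrank (σ i) (σ.injective.ne hi)

theorem card_filter_isParentMap_le (n : ℕ) :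
    #(univ.filter (IsParentMap (0 : Fin (n + 1)))) ≤ (n + 1) ^ n := by
  calc #(univ.filter (IsParentMap (0 : Fin (n + 1))))
      ≤ #(univ.image fun q : Fin n → Fin (n + 1) =>
          (Fin.cons 0 q : Fin (n + 1) → Fin (n + 1))) := by
        refine card_le_card fun p hp => mem_image.2 ⟨Fin.tail p, mem_univ _, ?_⟩
        rw [← (mem_filter.1 hp).2.1, Fin.cons_self_tail]
    _ ≤ #(univ : Finset (Fin n → Fin (n + 1))) := card_image_le
    _ = (n + 1) ^ n := by simp

section Peeling

variable {ι L : Type*} [Fintype ι] [DecidableEq ι] [Fintype L]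
  {w : L → L → ℝ} {K : ℝ} {g : L → ℝ} {C : ℝ} {o : ι} {p : ι → ι}

-- `y j` occurs only in the factor `w (y j) (y (p j))`, whose sum over `y j` is at most `K`.
theorem card_mul_sum_prod_le_of_leaf (hw : ∀ a b, 0 ≤ w a b) (hwK : ∀ b, ∑ a, w a b ≤ K)
    (hg : ∀ u, 0 ≤ g u) {A : Finset ι} {j : ι} (hjA : j ∈ A) (hjo : j ≠ o)
    (hleaf : ∀ i ∈ A, p i ≠ j) :
    Fintype.card L * ∑ y : ι → L, g (y o) * ∏ i ∈ A, w (y i) (y (p i))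
      ≤ K * ∑ y : ι → L, g (y o) * ∏ i ∈ A.erase j, w (y i) (y (p i)) := by
  have hsplit : ∀ (y : ι → L) (u : L),
      g (Function.update y j u o) *
          ∏ i ∈ A, w (Function.update y j u i) (Function.update y j u (p i))
        = (g (y o) * ∏ i ∈ A.erase j, w (y i) (y (p i))) * w u (y (p j)) := by
    intro y u
    rw [← mul_prod_erase A _ hjA, Function.update_self, Function.update_of_ne (hleaf j hjA),
      Function.update_of_ne hjo.symm, prod_congr rfl fun i hi => by
        rw [Function.update_of_ne (ne_of_mem_erase hi),
          Function.update_of_ne (hleaf i (mem_of_mem_erase hi))]]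
    ring
  rw [← nsmul_eq_mul, ← sum_sum_update_eq_card_nsmul j]
  simp_rw [hsplit, ← mul_sum]
  rw [mul_sum]
  refine sum_le_sum fun y _ => ?_
  rw [mul_comm K]
  exact mul_le_mul_of_nonneg_left (hwK _) (mul_nonneg (hg _) (prod_nonneg fun i _ => hw _ _))

variable [Nonempty L]

-- The coordinates outside `A ∪ {o}` are summed freely, whence the powers of `card L`.
theorem card_pow_mul_sum_prod_le (hw : ∀ a b, 0 ≤ w a b) (hwK : ∀ b, ∑ a, w a b ≤ K)
    (hgC : ∑ u, g u ≤ C) (hg : ∀ u, 0 ≤ g u) {rank : ι → ℕ}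
    (A : Finset ι) (hoA : o ∉ A) (hrank : ∀ i ∈ A, rank (p i) < rank i) :
    (Fintype.card L : ℝ) ^ (#A + 1) * ∑ y : ι → L, g (y o) * ∏ i ∈ A, w (y i) (y (p i))
      ≤ C * K ^ #A * Fintype.card L ^ Fintype.card ι := by
  induction A using Finset.strongInduction with
  | H A ih =>
  obtain rfl | hA := A.eq_empty_or_nonempty
  · have h := sum_sum_update_eq_card_nsmul o (fun y : ι → L => g (y o))
    simp only [Function.update_self, sum_const, card_univ, Fintype.card_fun, nsmul_eq_mul,
      Nat.cast_pow] at h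
    simp only [card_empty, zero_add, pow_one, prod_empty, mul_one, pow_zero, ← h]
    rw [mul_comm C]
    gcongr
  obtain ⟨j, hjA, hjmax⟩ := A.exists_max_image rank hA
  have hleaf : ∀ i ∈ A, p i ≠ j := fun i hi h => (hrank i hi).not_ge (h ▸ hjmax i hi)
  have hK : 0 ≤ K := (sum_nonneg fun a _ => hw a (Classical.arbitrary L)).trans (hwK _)
  have ih' := ih (A.erase j) (erase_ssubset hjA) (fun h => hoA (mem_of_mem_erase h))
    (fun i hi => hrank i (mem_of_mem_erase hi))
  rw [card_erase_of_mem hjA, Nat.sub_add_cancel (card_pos.2 hA)] at ih'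
  have hstep := card_mul_sum_prod_le_of_leaf hw hwK hg hjA (ne_of_mem_of_not_mem hjA hoA) hleaf
  calc (Fintype.card L : ℝ) ^ (#A + 1) * ∑ y : ι → L, g (y o) * ∏ i ∈ A, w (y i) (y (p i))
      = Fintype.card L ^ #A *
          (Fintype.card L * ∑ y : ι → L, g (y o) * ∏ i ∈ A, w (y i) (y (p i))) := by ring
    _ ≤ Fintype.card L ^ #A *
          (K * ∑ y : ι → L, g (y o) * ∏ i ∈ A.erase j, w (y i) (y (p i))) := by gcongr
    _ = K * (Fintype.card L ^ #A *
          ∑ y : ι → L, g (y o) * ∏ i ∈ A.erase j, w (y i) (y (p i))) := by ring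
    _ ≤ K * (C * K ^ (#A - 1) * Fintype.card L ^ Fintype.card ι) := by gcongr
    _ = C * K ^ #A * Fintype.card L ^ Fintype.card ι := by
        rw [← Nat.sub_add_cancel (card_pos.2 hA), Nat.add_sub_cancel]; ring

theorem sum_prod_parentMap_le (hw : ∀ a b, 0 ≤ w a b) (hwK : ∀ b, ∑ a, w a b ≤ K)
    (hgC : ∑ u, g u ≤ C) (hg : ∀ u, 0 ≤ g u) (hp : IsParentMap o p) :
    ∑ y : ι → L, g (y o) * ∏ i ∈ univ.erase o, w (y i) (y (p i))
      ≤ C * K ^ (Fintype.card ι - 1) := by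
  obtain ⟨-, rank, hrank⟩ := hp
  have : Nonempty ι := ⟨o⟩
  have h := card_pow_mul_sum_prod_le hw hwK hgC hg (univ.erase o) (notMem_erase o univ)
    fun i hi => hrank i (ne_of_mem_erase hi)
  rw [card_erase_of_mem (mem_univ o), card_univ, Nat.sub_add_cancel Fintype.card_pos,
    mul_comm] at h
  exact le_of_mul_le_mul_right h (by positivity)

end Peeling

namespace SimpleGraph

variable {V : Type*} {G : SimpleGraph V} {ρ v : V}

variable (G) in
noncomputable def parent (ρ v : V) : V :=
  if h : ∃ w, G.Adj v w ∧ G.dist w ρ < G.dist v ρ then h.choose else v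

theorem Connected.exists_adj_dist_lt (hG : G.Connected) (hv : v ≠ ρ) :
    ∃ w, G.Adj v w ∧ G.dist w ρ < G.dist v ρ := by
  obtain ⟨p, hp⟩ := hG.exists_walk_length_eq_dist v ρ
  cases p with
  | nil => exact absurd rfl hv
  | cons hadj q => exact ⟨_, hadj, (dist_le q).trans_lt (by simp [← hp])⟩

theorem parent_self : G.parent ρ ρ = ρ := by
  simp [parent]

theorem Connected.adj_parent (hG : G.Connected) (hv : v ≠ ρ) : G.Adj v (G.parent ρ v) := by
  have h := hG.exists_adj_dist_lt hv
  rw [parent, dif_pos h]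
  exact h.choose_spec.1

theorem Connected.dist_parent_lt (hG : G.Connected) (hv : v ≠ ρ) :
    G.dist (G.parent ρ v) ρ < G.dist v ρ := by
  have h := hG.exists_adj_dist_lt hv
  rw [parent, dif_pos h]
  exact h.choose_spec.2

theorem Connected.isParentMap_parent (hG : G.Connected) : IsParentMap ρ (G.parent ρ) :=
  ⟨parent_self, fun v => G.dist v ρ, fun _ hv => hG.dist_parent_lt hv⟩

theorem Connected.injOn_parent_edge (hG : G.Connected) :
    Set.InjOn (fun v => s(v, G.parent ρ v)) {v | v ≠ ρ} := by
  intro u hu v hv huv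
  rcases Sym2.eq_iff.1 huv with ⟨h, -⟩ | ⟨hu', hv'⟩
  · exact h
  · have hu'' := hG.dist_parent_lt hu
    have hv'' := hG.dist_parent_lt hv
    rw [hv'] at hu''
    rw [← hu'] at hv''
    omega

variable [Fintype V] [DecidableEq V]

-- Injectivity gives `card V - 1` distinct edges, which is all of them in a tree.
theorem IsTree.image_parent_edge_eq_edgeFinset [Fintype G.edgeSet] (hG : G.IsTree) (ρ : V) :
    (univ.erase ρ).image (fun v => s(v, G.parent ρ v)) = G.edgeFinset := by
  refine eq_of_subset_of_card_le (fun e he => ?_) ?_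
  · obtain ⟨v, hv, rfl⟩ := mem_image.1 he
    simpa using hG.connected.adj_parent (ne_of_mem_erase hv)
  · rw [card_image_of_injOn (hG.connected.injOn_parent_edge.mono fun v => ne_of_mem_erase),
      card_erase_of_mem (mem_univ ρ), card_univ, ← hG.card_edgeFinset, Nat.add_sub_cancel]

theorem IsTree.eq_of_parent_eq_s18 {G' : SimpleGraph V} [Fintype G.edgeSet] [Fintype G'.edgeSet]
    (hG : G.IsTree) (hG' : G'.IsTree) (h : G.parent ρ = G'.parent ρ) : G = G' := by
  rw [← edgeFinset_inj, ← hG.image_parent_edge_eq_edgeFinset ρ,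
    ← hG'.image_parent_edge_eq_edgeFinset ρ, h]

theorem IsTree.prod_edgeFinset_eq_prod_equiv {ι M : Type*} [Fintype ι] [DecidableEq ι]
    [CommMonoid M] [Fintype G.edgeSet] (hG : G.IsTree) (σ : ι ≃ V) (o : ι) (f : Sym2 V → M) :
    ∏ e ∈ G.edgeFinset, f e = ∏ i ∈ univ.erase o, f s(σ i, G.parent (σ o) (σ i)) := by
  rw [← hG.image_parent_edge_eq_edgeFinset (σ o),
    prod_image (hG.connected.injOn_parent_edge.mono fun v => ne_of_mem_erase)]
  exact (prod_equiv σ (by simp) (by simp)).symm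

theorem IsTree.factorial_mul_sum_mul_prod_eq [Fintype G.edgeSet] (hG : G.IsTree) {n : ℕ}
    (hV : Fintype.card V = n + 1) (f : V → ℝ) (F : Sym2 V → ℝ) :
    n ! * ((∑ v, f v) * ∏ e ∈ G.edgeFinset, F e)
      = ∑ σ : Fin (n + 1) ≃ V, f (σ 0) * ∏ i ∈ univ.erase 0, F s(σ i, G.parent (σ 0) (σ i)) := by
  rw [← mul_assoc, ← nsmul_eq_mul, ← sum_equiv_apply_zero hV, sum_mul]
  exact Fintype.sum_congr _ _ fun σ => by rw [hG.prod_edgeFinset_eq_prod_equiv σ 0]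

end SimpleGraph

theorem sum_isTree_le_sum_isParentMap {V ι : Type*} [Fintype V] [DecidableEq V] [Fintype ι]
    [DecidableEq ι] (σ : ι ≃ V) (o : ι) {F : (ι → ι) → ℝ} (hF : ∀ p, 0 ≤ F p) :
    ∑ T : {T : SimpleGraph V // T.IsTree}, F (σ.symm ∘ T.1.parent (σ o) ∘ σ)
      ≤ ∑ p ∈ univ.filter (IsParentMap o), F p := by
  refine sum_comp_le_sum_of_injOn (fun T _ => ?_) (fun T _ T' _ h => ?_) fun p _ => hF p
  · simpa using (T.2.connected.isParentMap_parent (ρ := σ o)).conj σ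
  · refine Subtype.ext (T.2.eq_of_parent_eq_s18 (ρ := σ o) T'.2 (funext fun v => ?_))
    simpa using congrFun h (σ.symm v)

section TreeSum

variable {L : Type*} [Fintype L] [DecidableEq L] [Nonempty L] {W : Sym2 L → ℝ} {K : ℝ}
  {g : L → ℝ} {C : ℝ}

theorem sum_isTree_le (hW : ∀ e, 0 ≤ W e) (hWK : ∀ b, ∑ a, W s(a, b) ≤ K)
    (hgC : ∑ u, g u ≤ C) (hg : ∀ u, 0 ≤ g u) {n : ℕ} {S : Finset (Finset L)}
    (hS : ∀ X ∈ S, #X = n + 1) :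
    ∑ X ∈ S, ∑ T : {T : SimpleGraph X // T.IsTree},
        (∑ v : X, g v) * ∏ e ∈ T.1.edgeFinset, W (e.map (↑))
      ≤ (n + 1) ^ n / n ! * (C * K ^ n) := by
  let H (y : Fin (n + 1) → L) (p : Fin (n + 1) → Fin (n + 1)) : ℝ :=
    g (y 0) * ∏ i ∈ univ.erase 0, W s(y i, y (p i))
  have hH : ∀ y p, 0 ≤ H y p := fun y p => mul_nonneg (hg _) (prod_nonneg fun i _ => hW _)
  have hCK : 0 ≤ C * K ^ n := by
    have hK := (sum_nonneg fun a _ => hW s(a, Classical.arbitrary L)).trans (hWK _)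
    have hC := (sum_nonneg fun u _ => hg u).trans hgC
    positivity
  have hlabel : ∀ X ∈ S, ∀ T : {T : SimpleGraph X // T.IsTree},
      n ! * ((∑ v : X, g v) * ∏ e ∈ T.1.edgeFinset, W (e.map (↑)))
        = ∑ σ : Fin (n + 1) ≃ X, H (fun i => σ i) (σ.symm ∘ T.1.parent (σ 0) ∘ σ) := by
    intro X hX T
    rw [T.2.factorial_mul_sum_mul_prod_eq (by simpa using hS X hX)]
    simp [H]
  rw [div_mul_eq_mul_div, le_div_iff₀ (by positivity), mul_comm, mul_sum]
  calc ∑ X ∈ S, n ! * ∑ T : {T : SimpleGraph X // T.IsTree},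
          (∑ v : X, g v) * ∏ e ∈ T.1.edgeFinset, W (e.map (↑))
      = ∑ X ∈ S, ∑ σ : Fin (n + 1) ≃ X, ∑ T : {T : SimpleGraph X // T.IsTree},
          H (fun i => σ i) (σ.symm ∘ T.1.parent (σ 0) ∘ σ) := by
        refine sum_congr rfl fun X hX => ?_
        rw [mul_sum, sum_comm]
        exact sum_congr rfl fun T _ => hlabel X hX T
    _ ≤ ∑ X ∈ S, ∑ σ : Fin (n + 1) ≃ X, ∑ p ∈ univ.filter (IsParentMap 0),
          H (fun i => σ i) p :=
        sum_le_sum fun X _ => sum_le_sum fun σ _ =>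
          sum_isTree_le_sum_isParentMap σ 0 fun p => hH (fun i => σ i) p
    _ ≤ ∑ y, ∑ p ∈ univ.filter (IsParentMap 0), H y p :=
        sum_sum_equiv_le_sum S fun y => sum_nonneg fun p _ => hH y p
    _ = ∑ p ∈ univ.filter (IsParentMap 0), ∑ y, H y p := sum_comm
    _ ≤ ∑ p ∈ univ.filter (IsParentMap (0 : Fin (n + 1))), C * K ^ n := by
        refine sum_le_sum fun p hp => ?_
        simpa using sum_prod_parentMap_le (w := fun a b => W s(a, b)) (fun a b => hW _) hWK
          hgC hg (mem_filter.1 hp).2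
    _ ≤ (n + 1) ^ n * (C * K ^ n) := by
        rw [sum_const, nsmul_eq_mul]
        gcongr
        exact_mod_cast card_filter_isParentMap_le n

end TreeSum

theorem sum_range_inv_pow_mul_pow_div_factorial_le {c : ℝ} (hc : 0 ≤ c) (N : ℕ) :
    ∑ n ∈ range N, (12 ^ (n + 1) : ℝ)⁻¹ * ((n + 1) ^ n / n ! * (c * 2 ^ n)) ≤ c := by
  have hterm (n : ℕ) : (12 ^ (n + 1) : ℝ)⁻¹ * ((n + 1) ^ n / n ! * 2 ^ n) ≤ (1 / 2) ^ n / 2 := by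
    have hexp : (n + 1 : ℝ) ^ n / n ! ≤ 3 ^ (n + 1) :=
      calc (n + 1 : ℝ) ^ n / n ! = (n + 1 : ℕ) ^ (n + 1) / (n + 1)! := by
            rw [Nat.factorial_succ]; push_cast; field_simp; ring
        _ ≤ Real.exp (n + 1 : ℕ) := Real.pow_div_factorial_le_exp _ (by positivity) _
        _ = Real.exp 1 ^ (n + 1) := by rw [← Real.exp_nat_mul, mul_one]
        _ ≤ 3 ^ (n + 1) := pow_le_pow_left₀ (Real.exp_pos 1).le Real.exp_one_lt_three.le _
    calc (12 ^ (n + 1) : ℝ)⁻¹ * ((n + 1) ^ n / n ! * 2 ^ n)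
        ≤ (12 ^ (n + 1) : ℝ)⁻¹ * (3 ^ (n + 1) * 2 ^ n) := by gcongr
      _ = (1 / 2) ^ n / 4 := by
        rw [show (12 : ℝ) = 3 * 2 * 2 by norm_num, mul_pow, mul_pow, one_div_pow]
        field_simp
        ring
      _ ≤ (1 / 2) ^ n / 2 := by gcongr; norm_num
  calc ∑ n ∈ range N, (12 ^ (n + 1) : ℝ)⁻¹ * ((n + 1) ^ n / n ! * (c * 2 ^ n))
      = c * ∑ n ∈ range N, (12 ^ (n + 1) : ℝ)⁻¹ * ((n + 1) ^ n / n ! * 2 ^ n) := by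
        rw [mul_sum]; exact sum_congr rfl fun n _ => by ring
    _ ≤ c * ∑ n ∈ range N, (1 / 2 : ℝ) ^ n / 2 := by gcongr with n; exact hterm n
    _ ≤ c := by
        rw [← sum_div]
        nlinarith [sum_geometric_two_le N]

section Metric

variable {L : Type*} [MetricSpace L] [Fintype L]

theorem sum_exp_le_geomConst (μ : ℝ) (x : L) :
    ∑ y, Real.exp (-μ * dist x y) ≤ geomConst L μ :=
  le_ciSup (f := fun x : L => ∑ y, Real.exp (-μ * dist x y)) (Set.finite_range _).bddAbove x

theorem one_le_geomConst [Nonempty L] (μ : ℝ) : 1 ≤ geomConst L μ := by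
  obtain ⟨x⟩ := ‹Nonempty L›
  calc (1 : ℝ) = Real.exp (-μ * dist x x) := by simp
    _ ≤ ∑ y, Real.exp (-μ * dist x y) :=
        single_le_sum (f := fun y => Real.exp (-μ * dist x y)) (fun y _ => (Real.exp_pos _).le)
          (mem_univ x)
    _ ≤ geomConst L μ := sum_exp_le_geomConst μ x

variable (L) in
noncomputable def edgeWeight (μ : ℝ) (e : Sym2 L) : ℝ :=
  (geomConst L μ)⁻¹ * Real.exp (-μ * Sym2.lift ⟨dist, dist_comm⟩ e)

theorem edgeWeight_nonneg [Nonempty L] (μ : ℝ) (e : Sym2 L) : 0 ≤ edgeWeight L μ e := by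
  have := one_le_geomConst (L := L) μ
  unfold edgeWeight
  positivity

theorem sum_edgeWeight_le_one [Nonempty L] (μ : ℝ) (b : L) :
    ∑ a, edgeWeight L μ s(a, b) ≤ 1 := by
  have hc := one_le_geomConst (L := L) μ
  simp only [edgeWeight, Sym2.lift_mk, ← mul_sum]
  rw [inv_mul_le_one₀ (by linarith)]
  exact (sum_congr rfl fun a _ => by rw [dist_comm]).trans_le (sum_exp_le_geomConst μ b)

theorem prod_edgeWeight (μ : ℝ) {X : Finset L} (F : Finset (Sym2 X)) :
    ∏ e ∈ F, edgeWeight L μ (e.map (↑))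
      = (geomConst L μ ^ #F)⁻¹ * Real.exp (-μ * edgeLength F) := by
  rw [edgeLength, mul_sum, Real.exp_sum, ← inv_pow, ← prod_const, ← prod_mul_distrib]
  refine prod_congr rfl fun e _ => ?_
  induction e using Sym2.ind with
  | _ a b => simp [edgeWeight]

theorem sum_subforest_eq (m mV a b : ℝ) {X : Finset L} (E : Finset (Sym2 X)) :
    ∑ F ∈ E.powerset, a * (geomConst L mV ^ #F)⁻¹ * (geomConst L m ^ (#E - #F))⁻¹ *
        Real.exp (-mV * edgeLength F - m * edgeLength (E \ F)) * b
      = a * b * ∏ e ∈ E, (edgeWeight L mV + edgeWeight L m) (e.map (↑)) := by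
  simp only [Pi.add_apply]
  rw [prod_add, mul_sum]
  refine sum_congr rfl fun F hF => ?_
  rw [prod_edgeWeight, prod_edgeWeight, card_sdiff_of_subset (mem_powerset.1 hF),
    sub_eq_add_neg, Real.exp_add, ← neg_mul]
  ring

theorem exp_neg_mul_iInf_dist_le (μ : ℝ) (x : L) {X : Finset L} (hX : X.Nonempty) :
    Real.exp (-μ * ⨅ y : X, dist x y) ≤ ∑ y : X, Real.exp (-μ * dist x y) := by
  have : Nonempty X := hX.to_subtype
  obtain ⟨y₀, hy₀⟩ := exists_eq_ciInf_of_finite (f := fun y : X => dist x y)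
  rw [← hy₀]
  exact single_le_sum (f := fun y : X => Real.exp (-μ * dist x y))
    (fun y _ => (Real.exp_pos _).le) (mem_univ y₀)

theorem sum_powersetCard_succ_le [Nonempty L] (m mV tm : ℝ) (x : L) (n : ℕ) :
    ∑ X ∈ powersetCard (n + 1) (univ : Finset L), ∑ T : {T : SimpleGraph X // T.IsTree},
      ∑ F ∈ T.1.edgeFinset.powerset,
        ((12 : ℝ) ^ #X)⁻¹ * (geomConst L mV ^ #F)⁻¹ *
          (geomConst L m ^ (#T.1.edgeFinset - #F))⁻¹ *
          Real.exp (-mV * edgeLength F - m * edgeLength (T.1.edgeFinset \ F)) *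
          Real.exp (-tm * ⨅ y : X, dist x y)
      ≤ (12 ^ (n + 1) : ℝ)⁻¹ * ((n + 1) ^ n / n ! * (geomConst L tm * 2 ^ n)) := by
  have hW (e : Sym2 L) : 0 ≤ (edgeWeight L mV + edgeWeight L m) e :=
    add_nonneg (edgeWeight_nonneg mV e) (edgeWeight_nonneg m e)
  have hWK (b : L) : ∑ a, (edgeWeight L mV + edgeWeight L m) s(a, b) ≤ 2 := by
    simp only [Pi.add_apply, sum_add_distrib]
    linarith [sum_edgeWeight_le_one (L := L) mV b, sum_edgeWeight_le_one (L := L) m b]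
  calc _ = (12 ^ (n + 1) : ℝ)⁻¹ * ∑ X ∈ powersetCard (n + 1) (univ : Finset L),
          ∑ T : {T : SimpleGraph X // T.IsTree}, Real.exp (-tm * ⨅ y : X, dist x y) *
            ∏ e ∈ T.1.edgeFinset, (edgeWeight L mV + edgeWeight L m) (e.map (↑)) := by
        rw [mul_sum]
        refine sum_congr rfl fun X hX => ?_
        rw [(mem_powersetCard.1 hX).2, mul_sum]
        exact sum_congr rfl fun T _ => by rw [sum_subforest_eq]; ring
    _ ≤ (12 ^ (n + 1) : ℝ)⁻¹ * ∑ X ∈ powersetCard (n + 1) (univ : Finset L),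
          ∑ T : {T : SimpleGraph X // T.IsTree}, (∑ y : X, Real.exp (-tm * dist x y)) *
            ∏ e ∈ T.1.edgeFinset, (edgeWeight L mV + edgeWeight L m) (e.map (↑)) := by
        refine mul_le_mul_of_nonneg_left (sum_le_sum fun X hX => sum_le_sum fun T _ =>
          mul_le_mul_of_nonneg_right (exp_neg_mul_iInf_dist_le tm x ?_)
            (prod_nonneg fun e _ => hW _)) (by positivity)
        exact card_pos.1 ((mem_powersetCard.1 hX).2 ▸ n.succ_pos)
    _ ≤ _ := mul_le_mul_of_nonneg_left (sum_isTree_le hW hWK (sum_exp_le_geomConst tm x)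
          (fun _ => (Real.exp_pos _).le) fun X hX => (mem_powersetCard.1 hX).2) (by positivity)

end Metric

theorem volume_estimate_general {L : Type*} [MetricSpace L] [Fintype L] [Nonempty L]
    (m mV tm : ℝ) :
    ∀ x : L,
      (∑ X ∈ (Finset.univ : Finset L).powerset.filter Finset.Nonempty,
        ∑ T : {T : SimpleGraph {y // y ∈ X} // T.IsTree},
          ∑ F ∈ (T : SimpleGraph {y // y ∈ X}).edgeFinset.powerset,
            ((12 : ℝ) ^ X.card)⁻¹ *
              ((geomConst L mV) ^ F.card)⁻¹ *
              ((geomConst L m) ^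
                ((T : SimpleGraph {y // y ∈ X}).edgeFinset.card - F.card))⁻¹ *
              Real.exp (-mV * edgeLength F -
                m * edgeLength ((T : SimpleGraph {y // y ∈ X}).edgeFinset \ F)) *
              Real.exp (-tm * ⨅ y : {y // y ∈ X}, dist x (y : L))) ≤
        geomConst L tm := by
  intro x
  rw [sum_filter_nonempty_powerset]
  exact (sum_le_sum fun n _ => sum_powersetCard_succ_le m mV tm x n).trans
    (sum_range_inv_pow_mul_pow_div_factorial_le (zero_le_one.trans (one_le_geomConst tm)) _)

/-- Key volume estimate for the cluster expansion: for any point `x` of a finite metric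
space `L`, the sum over nonempty subsets `X ⊆ L`, trees `T` on `X` and subforests `F ⊆ T`
of `12^{-|X|} c_g(m_V)^{-|F|} c_g(m)^{-|T∖F|} e^{-m_V d(F) - m d(T∖F)} e^{-m̃ d(x,X)}`
is at most `c_g(m̃)`. -/
theorem volume_estimate {L : Type*} [MetricSpace L] [Fintype L] [Nonempty L]
    (m mV tm : ℝ) (hm : 0 < m) (hmV : 0 < mV) (htm : 0 < tm) :
    ∀ x : L,
      (∑ X ∈ (Finset.univ : Finset L).powerset.filter Finset.Nonempty,
        ∑ T : {T : SimpleGraph {y // y ∈ X} // T.IsTree},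
          ∑ F ∈ (T : SimpleGraph {y // y ∈ X}).edgeFinset.powerset,
            ((12 : ℝ) ^ X.card)⁻¹ *
              ((geomConst L mV) ^ F.card)⁻¹ *
              ((geomConst L m) ^
                ((T : SimpleGraph {y // y ∈ X}).edgeFinset.card - F.card))⁻¹ *
              Real.exp (-mV * edgeLength F -
                m * edgeLength ((T : SimpleGraph {y // y ∈ X}).edgeFinset \ F)) *
              Real.exp (-tm * ⨅ y : {y // y ∈ X}, dist x (y : L))) ≤
        geomConst L tm :=
  volume_estimate_general m mV tm
end
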